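/- arXiv:1511.04734 — 6 statements merged into one kernel-verified Lean document; each statement's English description precedes it below -/
import Mathlib

section
/- Let f : Π → ℂ be the infinitesimal generator of a one-parameter continuous semigroup of holomorphic self-maps of the right half-plane Π. If the angular limit f'(∞) := ∠lim_{z→∞} f(z)/(z+1) exists and is a nonnegative real number, then Re f(z) ≥ 0 for all z ∈ Π. -/
open Filter Set MeasureTheory

noncomputable section

/-- The right half-plane. -/
def HP : Set ℂ := {z : ℂ | 0 < z.re}

/-- A one-parameter continuous semigroup of holomorphic self-maps of the right half-plane. -/
structure IsSemigroupOn (F : ℝ → ℂ → ℂ) : Prop where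
  holo : ∀ t : ℝ, 0 ≤ t → DifferentiableOn ℂ (F t) HP
  maps : ∀ t : ℝ, 0 ≤ t → MapsTo (F t) HP HP
  comp : ∀ t s : ℝ, 0 ≤ t → 0 ≤ s → ∀ z ∈ HP, F t (F s z) = F (t + s) z
  cont : ∀ z ∈ HP, Tendsto (fun t : ℝ => F t z) (nhdsWithin 0 (Ioi 0)) (nhds z)

/-- `f` is the infinitesimal generator of the semigroup `F` on the right half-plane. -/
def Generates (f : ℂ → ℂ) (F : ℝ → ℂ → ℂ) : Prop :=
  IsSemigroupOn F ∧
  ∀ z ∈ HP, Tendsto (fun t : ℝ => (F t z - z) / (t : ℂ)) (nhdsWithin 0 (Ioi 0)) (nhds (f z))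
/-- The filter of non-tangential approach to infinity: `|z| → ∞` within the sector
`|arg z| ≤ π/2 - ε`. -/
def atInftySector (ε : ℝ) : Filter ℂ :=
  (Filter.comap (fun z : ℂ => ‖z‖) Filter.atTop) ⊓
    Filter.principal {z : ℂ | |Complex.arg z| ≤ Real.pi / 2 - ε}

lemma isOpen_HP : IsOpen HP := isOpen_lt continuous_const Complex.continuous_re

lemma add_conj_ne {u v : ℂ} (hu : 0 < u.re) (hv : 0 < v.re) :
    v + (starRingEnd ℂ) u ≠ 0 := by
  intro h
  have : (v + (starRingEnd ℂ) u).re = 0 := by rw [h]; simp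
  simp only [Complex.add_re, Complex.conj_re] at this
  linarith

lemma normSq_lt {u v : ℂ} (hu : 0 < u.re) (hv : 0 < v.re) :
    Complex.normSq (v - u) < Complex.normSq (v + (starRingEnd ℂ) u) := by
  simp only [Complex.normSq_apply, Complex.sub_re, Complex.sub_im, Complex.add_re,
    Complex.add_im, Complex.conj_re, Complex.conj_im]
  nlinarith [hu, hv]

lemma abs_lt_abs {u v : ℂ} (hu : 0 < u.re) (hv : 0 < v.re) :
    ‖v - u‖ < ‖v + (starRingEnd ℂ) u‖ := by
  have h := normSq_lt hu hv
  rw [Complex.norm_def, Complex.norm_def]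
  exact Real.sqrt_lt_sqrt (Complex.normSq_nonneg _) h

/-- Schwarz–Pick inequality on the right half-plane. -/
theorem schwarz_pick {φ : ℂ → ℂ} (hd : DifferentiableOn ℂ φ HP) (hm : MapsTo φ HP HP)
    {z w : ℂ} (hz : z ∈ HP) (hw : w ∈ HP) :
    Complex.normSq (φ z - φ w) * Complex.normSq (z + (starRingEnd ℂ) w) ≤
      Complex.normSq (z - w) * Complex.normSq (φ z + (starRingEnd ℂ) (φ w)) := by
  have hzr : 0 < z.re := hz
  have hwr : 0 < w.re := hw
  set ψ : ℂ → ℂ := fun ζ => (w + (starRingEnd ℂ) w * ζ) / (1 - ζ) with hψ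
  have hball : ∀ ζ : ℂ, ζ ∈ Metric.ball (0:ℂ) 1 → Complex.normSq ζ < 1 := by
    intro ζ hζ
    rw [Metric.mem_ball, dist_zero_right] at hζ
    have := Complex.sq_norm ζ
    nlinarith [norm_nonneg ζ]
  have hone : ∀ ζ : ℂ, ζ ∈ Metric.ball (0:ℂ) 1 → (1:ℂ) - ζ ≠ 0 := by
    intro ζ hζ h
    have : ζ = 1 := by linear_combination -h
    rw [this] at hζ
    simp at hζ
  have hψmaps : MapsTo ψ (Metric.ball (0:ℂ) 1) HP := by
    intro ζ hζ
    have h1 : (1:ℂ) - ζ ≠ 0 := hone ζ hζ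
    have h2 : Complex.normSq ζ < 1 := hball ζ hζ
    show 0 < (ψ ζ).re
    rw [hψ]
    simp only [Complex.div_re]
    rw [← add_div]
    apply div_pos
    · simp only [Complex.add_re, Complex.add_im, Complex.mul_re, Complex.mul_im,
        Complex.conj_re, Complex.conj_im, Complex.sub_re, Complex.sub_im,
        Complex.one_re, Complex.one_im, Complex.normSq_apply] at *
      nlinarith [hwr, h2]
    · exact Complex.normSq_pos.mpr h1
  have hψdiff : DifferentiableOn ℂ ψ (Metric.ball (0:ℂ) 1) := by
    apply DifferentiableOn.div
    · exact (differentiableOn_const _).add ((differentiableOn_const _).mul differentiableOn_id)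
    · exact (differentiableOn_const _).sub differentiableOn_id
    · exact hone
  have hφw : φ w ∈ HP := hm hw
  set g : ℂ → ℂ := fun ζ => (φ (ψ ζ) - φ w) / (φ (ψ ζ) + (starRingEnd ℂ) (φ w)) with hg
  have hgval : ∀ ζ ∈ Metric.ball (0:ℂ) 1, φ (ψ ζ) ∈ HP := fun ζ hζ => hm (hψmaps hζ)
  have hgdiff : DifferentiableOn ℂ g (Metric.ball (0:ℂ) 1) := by
    apply DifferentiableOn.div
    · exact ((hd.comp hψdiff hψmaps)).sub (differentiableOn_const _)
    · exact ((hd.comp hψdiff hψmaps)).add (differentiableOn_const _)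
    · intro ζ hζ
      exact add_conj_ne hφw (hgval ζ hζ)
  have hgmaps : MapsTo g (Metric.ball (0:ℂ) 1) (Metric.ball (0:ℂ) 1) := by
    intro ζ hζ
    rw [Metric.mem_ball, dist_zero_right, hg]
    simp only [norm_div]
    rw [div_lt_one]
    · exact abs_lt_abs hφw (hgval ζ hζ)
    · rw [norm_pos_iff]
      exact add_conj_ne hφw (hgval ζ hζ)
  have hψ0 : ψ 0 = w := by rw [hψ]; simp
  have hg0 : g 0 = 0 := by rw [hg]; simp [hψ0]
  -- the point
  set ζ₀ : ℂ := (z - w) / (z + (starRingEnd ℂ) w) with hζ₀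
  have hden : z + (starRingEnd ℂ) w ≠ 0 := add_conj_ne hw hz
  have hζ₀ball : ‖ζ₀‖ < 1 := by
    rw [hζ₀, norm_div, div_lt_one]
    · exact abs_lt_abs hw hz
    · rw [norm_pos_iff]; exact hden
  have hwconj : w + (starRingEnd ℂ) w ≠ 0 := add_conj_ne hw hw
  have hψζ₀ : ψ ζ₀ = z := by
    show (w + (starRingEnd ℂ) w * ((z - w) / (z + (starRingEnd ℂ) w))) /
        (1 - (z - w) / (z + (starRingEnd ℂ) w)) = z
    rw [div_eq_iff]
    · field_simp
      ring
    · rw [sub_ne_zero]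
      intro h
      apply hwconj
      have := div_eq_one_iff_eq hden |>.mp h.symm
      linear_combination -this
  have key := Complex.norm_le_norm_of_mapsTo_ball hgdiff (hgmaps.mono_right Metric.ball_subset_closedBall) hg0 hζ₀ball
  rw [hg] at key
  simp only [hψζ₀] at key
  rw [hζ₀] at key
  rw [norm_div, norm_div] at key
  have hden2 : φ z + (starRingEnd ℂ) (φ w) ≠ 0 := add_conj_ne hφw (hm hz)
  have hpos1 : 0 < ‖z + (starRingEnd ℂ) w‖ := norm_pos_iff.mpr hden
  have hpos2 : 0 < ‖φ z + (starRingEnd ℂ) (φ w)‖ := norm_pos_iff.mpr hden2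
  rw [div_le_div_iff₀ hpos2 hpos1] at key
  have key2 := mul_le_mul key key (by positivity) (by positivity)
  rw [← Complex.sq_norm, ← Complex.sq_norm, ← Complex.sq_norm, ← Complex.sq_norm]
  nlinarith [key2]


lemma normSq_slope {X : ℝ → ℂ} {x d : ℂ}
    (hX : Tendsto X (nhdsWithin 0 (Ioi 0)) (nhds x))
    (hd : Tendsto (fun t => (X t - x) / (t : ℂ)) (nhdsWithin 0 (Ioi 0)) (nhds d)) :
    Tendsto (fun t => (Complex.normSq (X t) - Complex.normSq x) / t)
      (nhdsWithin 0 (Ioi 0)) (nhds ((d * (starRingEnd ℂ) x + x * (starRingEnd ℂ) d).re)) := by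
  have hconj : Tendsto (fun t => (starRingEnd ℂ) ((X t - x) / (t : ℂ)))
      (nhdsWithin 0 (Ioi 0)) (nhds ((starRingEnd ℂ) d)) :=
    ((Complex.continuous_conj.tendsto d).comp hd)
  have hXconj : Tendsto (fun t => (starRingEnd ℂ) (X t)) (nhdsWithin 0 (Ioi 0))
      (nhds ((starRingEnd ℂ) x)) := (Complex.continuous_conj.tendsto x).comp hX
  have hmain : Tendsto
      (fun t => (((X t - x) / (t : ℂ)) * (starRingEnd ℂ) (X t) +
        x * (starRingEnd ℂ) ((X t - x) / (t : ℂ))).re)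
      (nhdsWithin 0 (Ioi 0)) (nhds ((d * (starRingEnd ℂ) x + x * (starRingEnd ℂ) d).re)) := by
    exact (Complex.continuous_re.tendsto _).comp ((hd.mul hXconj).add (tendsto_const_nhds.mul hconj))
  apply hmain.congr'
  filter_upwards [self_mem_nhdsWithin] with t ht
  have ht0 : (t : ℝ) ≠ 0 := ne_of_gt ht
  have htc : (t : ℂ) ≠ 0 := by exact_mod_cast ht0
  have hconjdiv : (starRingEnd ℂ) ((X t - x) / (t : ℂ)) = (starRingEnd ℂ) (X t - x) / (t : ℂ) := by
    rw [map_div₀, Complex.conj_ofReal]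
  rw [hconjdiv]
  have hid : ((X t - x) / (t : ℂ)) * (starRingEnd ℂ) (X t) +
      x * ((starRingEnd ℂ) (X t - x) / (t : ℂ)) =
      ((Complex.normSq (X t) - Complex.normSq x : ℝ) : ℂ) / ((t : ℝ) : ℂ) := by
    rw [Complex.ofReal_sub, ← Complex.mul_conj, ← Complex.mul_conj]
    field_simp
    rw [map_sub]
    ring
  rw [hid]
  rw [← Complex.ofReal_div, Complex.ofReal_re]

/-- Dissipativity inequality for generators. -/
theorem dissip {f : ℂ → ℂ} {F : ℝ → ℂ → ℂ} (hgen : Generates f F)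
    {z w : ℂ} (hz : z ∈ HP) (hw : w ∈ HP) :
    ((f z - f w) * (starRingEnd ℂ) (z - w)).re * Complex.normSq (z + (starRingEnd ℂ) w) ≤
      Complex.normSq (z - w) * ((f z + (starRingEnd ℂ) (f w)) * (starRingEnd ℂ) (z + (starRingEnd ℂ) w)).re := by
  obtain ⟨hsg, hder⟩ := hgen
  set L := nhdsWithin (0:ℝ) (Ioi 0) with hL
  have hcz := hsg.cont z hz
  have hcw := hsg.cont w hw
  have hdz := hder z hz
  have hdw := hder w hw
  -- slope for D t = F t z - F t w
  have hXD : Tendsto (fun t => F t z - F t w) L (nhds (z - w)) := hcz.sub hcw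
  have hdD : Tendsto (fun t => ((F t z - F t w) - (z - w)) / (t : ℂ)) L
      (nhds (f z - f w)) := by
    apply (hdz.sub hdw).congr
    intro t
    ring
  have hD := normSq_slope hXD hdD
  -- slope for E t = F t z + conj (F t w)
  have hXE : Tendsto (fun t => F t z + (starRingEnd ℂ) (F t w)) L
      (nhds (z + (starRingEnd ℂ) w)) :=
    hcz.add ((Complex.continuous_conj.tendsto w).comp hcw)
  have hdE : Tendsto (fun t => ((F t z + (starRingEnd ℂ) (F t w)) - (z + (starRingEnd ℂ) w)) / (t : ℂ)) L
      (nhds (f z + (starRingEnd ℂ) (f w))) := by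
    apply (hdz.add ((Complex.continuous_conj.tendsto (f w)).comp hdw)).congr
    intro t
    show (F t z - z) / (t:ℂ) + (starRingEnd ℂ) ((F t w - w) / (t:ℂ)) = _
    rw [map_div₀, map_sub, Complex.conj_ofReal]
    ring
  have hE := normSq_slope hXE hdE
  -- combined limit
  have hV : Tendsto (fun t =>
      ((Complex.normSq (F t z - F t w) - Complex.normSq (z - w)) / t) *
        Complex.normSq (z + (starRingEnd ℂ) w) -
      Complex.normSq (z - w) *
        ((Complex.normSq (F t z + (starRingEnd ℂ) (F t w)) -
          Complex.normSq (z + (starRingEnd ℂ) w)) / t)) L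
      (nhds (((f z - f w) * (starRingEnd ℂ) (z - w) +
          (z - w) * (starRingEnd ℂ) (f z - f w)).re *
          Complex.normSq (z + (starRingEnd ℂ) w) -
        Complex.normSq (z - w) *
          ((f z + (starRingEnd ℂ) (f w)) * (starRingEnd ℂ) (z + (starRingEnd ℂ) w) +
            (z + (starRingEnd ℂ) w) * (starRingEnd ℂ) (f z + (starRingEnd ℂ) (f w))).re)) :=
    (hD.mul_const _).sub (hE.const_mul _)
  have hle : (((f z - f w) * (starRingEnd ℂ) (z - w) +
          (z - w) * (starRingEnd ℂ) (f z - f w)).re *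
          Complex.normSq (z + (starRingEnd ℂ) w) -
        Complex.normSq (z - w) *
          ((f z + (starRingEnd ℂ) (f w)) * (starRingEnd ℂ) (z + (starRingEnd ℂ) w) +
            (z + (starRingEnd ℂ) w) * (starRingEnd ℂ) (f z + (starRingEnd ℂ) (f w))).re) ≤ 0 := by
    apply le_of_tendsto hV
    filter_upwards [self_mem_nhdsWithin] with t ht
    have ht' : (0:ℝ) < t := ht
    have hsp := schwarz_pick (hsg.holo t ht'.le) (hsg.maps t ht'.le) hz hw
    have heq : ((Complex.normSq (F t z - F t w) - Complex.normSq (z - w)) / t) *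
        Complex.normSq (z + (starRingEnd ℂ) w) -
      Complex.normSq (z - w) *
        ((Complex.normSq (F t z + (starRingEnd ℂ) (F t w)) -
          Complex.normSq (z + (starRingEnd ℂ) w)) / t) =
      (Complex.normSq (F t z - F t w) * Complex.normSq (z + (starRingEnd ℂ) w) -
        Complex.normSq (z - w) * Complex.normSq (F t z + (starRingEnd ℂ) (F t w))) / t := by
      field_simp
      ring
    rw [heq]
    apply div_nonpos_of_nonpos_of_nonneg _ ht'.le
    linarith [hsp]
  -- simplify the conjugate-pairs
  have e1 : ((f z - f w) * (starRingEnd ℂ) (z - w) +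
      (z - w) * (starRingEnd ℂ) (f z - f w)).re =
      2 * ((f z - f w) * (starRingEnd ℂ) (z - w)).re := by
    have : (z - w) * (starRingEnd ℂ) (f z - f w) =
        (starRingEnd ℂ) ((f z - f w) * (starRingEnd ℂ) (z - w)) := by
      rw [map_mul, Complex.conj_conj]
      ring
    rw [this, Complex.add_re, Complex.conj_re]
    ring
  have e2 : ((f z + (starRingEnd ℂ) (f w)) * (starRingEnd ℂ) (z + (starRingEnd ℂ) w) +
      (z + (starRingEnd ℂ) w) * (starRingEnd ℂ) (f z + (starRingEnd ℂ) (f w))).re =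
      2 * ((f z + (starRingEnd ℂ) (f w)) * (starRingEnd ℂ) (z + (starRingEnd ℂ) w)).re := by
    have : (z + (starRingEnd ℂ) w) * (starRingEnd ℂ) (f z + (starRingEnd ℂ) (f w)) =
        (starRingEnd ℂ) ((f z + (starRingEnd ℂ) (f w)) * (starRingEnd ℂ) (z + (starRingEnd ℂ) w)) := by
      rw [map_mul, Complex.conj_conj]
      ring
    rw [this, Complex.add_re, Complex.conj_re]
    ring
  rw [e1, e2] at hle
  linarith

/-- If the angular derivative of a semigroup generator at infinity exists and is a nonnegative
real number, then the generator has nonnegative real part. -/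
theorem stmt3 (f : ℂ → ℂ) (F : ℝ → ℂ → ℂ) (hgen : Generates f F) (a : ℝ) (ha : 0 ≤ a)
    (hlim : ∀ ε : ℝ, 0 < ε → ε < Real.pi / 2 →
      Tendsto (fun z : ℂ => f z / (z + 1)) (atInftySector ε) (nhds (a : ℂ))) :
    ∀ z ∈ HP, 0 ≤ (f z).re := by
  intro z hz
  have hzre : 0 < z.re := hz
  have hpi : (3:ℝ) < Real.pi := Real.pi_gt_three
  -- the real axis tends into the sector
  have hsec : Tendsto (fun x : ℝ => (x : ℂ)) atTop (atInftySector 1) := by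
    rw [atInftySector]
    refine tendsto_inf.mpr ⟨?_, ?_⟩
    · rw [tendsto_comap_iff]
      apply Tendsto.congr' _ tendsto_id
      filter_upwards [eventually_ge_atTop (0:ℝ)] with x hx
      simp [Complex.norm_real, abs_of_nonneg hx]
    · rw [tendsto_principal]
      filter_upwards [eventually_ge_atTop (0:ℝ)] with x hx
      simp only [mem_setOf_eq, Complex.arg_ofReal_of_nonneg hx, abs_zero]
      linarith
  have h2 : Tendsto (fun x : ℝ => f x / ((x:ℂ) + 1)) atTop (nhds (a : ℂ)) :=
    (hlim 1 one_pos (by linarith)).comp hsec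
  -- the remainder v
  set v : ℝ → ℂ := fun x => (f x - a * (x + 1)) / x with hvdef
  have hquot : Tendsto (fun x : ℝ => (((x:ℂ) + 1) / (x:ℂ))) atTop (nhds 1) := by
    have hinv : Tendsto (fun x : ℝ => ((x:ℂ))⁻¹) atTop (nhds 0) := by
      have h := (Complex.continuous_ofReal.tendsto 0).comp tendsto_inv_atTop_zero
      simp only [Function.comp_def, Complex.ofReal_inv, Complex.ofReal_zero] at h
      exact h
    have h1 := (tendsto_const_nhds (x := (1:ℂ)) (f := atTop (α := ℝ))).add hinv
    rw [add_zero] at h1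
    apply h1.congr'
    filter_upwards [eventually_ge_atTop (1:ℝ)] with x hx
    have hx0 : (x:ℂ) ≠ 0 := by
      simp only [ne_eq, Complex.ofReal_eq_zero]
      linarith
    field_simp
  have hv : Tendsto v atTop (nhds 0) := by
    have h3 := (h2.sub (tendsto_const_nhds (x := (a:ℂ)))).mul hquot
    rw [sub_self, zero_mul] at h3
    apply h3.congr'
    filter_upwards [eventually_ge_atTop (1:ℝ)] with x hx
    have hx0 : (x:ℂ) ≠ 0 := by
      simp only [ne_eq, Complex.ofReal_eq_zero]; linarith
    have hx1 : (x:ℂ) + 1 ≠ 0 := by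
      intro h
      have : ((x:ℂ) + 1).re = 0 := by rw [h]; simp
      simp only [Complex.add_re, Complex.ofReal_re, Complex.one_re] at this
      linarith
    rw [hvdef]
    field_simp
  have hvre : Tendsto (fun x => (v x).re) atTop (nhds 0) := by
    have := (Complex.continuous_re.tendsto 0).comp hv
    exact this
  have hvim : Tendsto (fun x => (v x).im) atTop (nhds 0) := by
    have := (Complex.continuous_im.tendsto 0).comp hv
    exact this
  have hu : Tendsto (fun x : ℝ => 1 / x) atTop (nhds 0) := by
    simpa [one_div] using tendsto_inv_atTop_zero
  -- the polynomial expression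
  set G : ℝ × ℝ × ℝ → ℝ := fun p =>
    (2*(f z).re - 2*a*z.re) - 2*z.re*p.2.1
    + p.1*(4*z.re*z.im*p.2.2 - 2*a*z.re)
    + p.1^2*(2*z.im^2*(f z).re - 4*z.re*z.im*(f z).im + 2*z.re*z.im^2*p.2.1
        - 2*z.re^2*(f z).re + 2*z.re^3*p.2.1 + 2*a*z.re*z.im^2 + 2*a*z.re^3)
    + p.1^3*(2*a*z.re*z.im^2 + 2*a*z.re^3) with hGdef
  have hGcont : Continuous G := by
    rw [hGdef]; fun_prop
  have hGlim : Tendsto (fun x : ℝ => G (1/x, (v x).re, (v x).im)) atTop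
      (nhds (2*(f z).re - 2*a*z.re)) := by
    have := (hGcont.tendsto ((0:ℝ), (0:ℝ), (0:ℝ))).comp
      (hu.prodMk_nhds (hvre.prodMk_nhds hvim))
    have hG0 : G (0, 0, 0) = 2*(f z).re - 2*a*z.re := by
      rw [hGdef]; simp
    rw [hG0] at this
    exact this
  have hfinal : ∀ᶠ x : ℝ in atTop, 0 ≤ G (1/x, (v x).re, (v x).im) := by
    filter_upwards [eventually_ge_atTop (1:ℝ)] with x hx1
    have hx0 : (0:ℝ) < x := lt_of_lt_of_le one_pos hx1
    have hxC : (x:ℂ) ≠ 0 := by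
      simp only [ne_eq, Complex.ofReal_eq_zero]; linarith
    have hwHP : ((x:ℂ)) ∈ HP := by
      show 0 < ((x:ℂ)).re
      simpa using hx0
    have hQ := dissip hgen hz hwHP
    have hW : f x = (a:ℂ) * (x + 1) + x * v x := by
      rw [hvdef]
      field_simp
      ring
    rw [hW] at hQ
    have h3 : (0:ℝ) < x^3 := by positivity
    have hideq : G (1/x, (v x).re, (v x).im) =
        (Complex.normSq (z - (x:ℂ)) *
            ((f z + (starRingEnd ℂ) ((a:ℂ) * (x + 1) + x * v x)) *
              (starRingEnd ℂ) (z + (starRingEnd ℂ) (x:ℂ))).re -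
          ((f z - ((a:ℂ) * (x + 1) + x * v x)) * (starRingEnd ℂ) (z - (x:ℂ))).re *
            Complex.normSq (z + (starRingEnd ℂ) (x:ℂ))) / x^3 := by
      rw [eq_div_iff h3.ne']
      rw [hGdef]
      simp only [Complex.normSq_apply, Complex.mul_re, Complex.mul_im, Complex.sub_re,
        Complex.sub_im, Complex.add_re, Complex.add_im, Complex.conj_re, Complex.conj_im,
        Complex.ofReal_re, Complex.ofReal_im, Complex.one_re, Complex.one_im]
      field_simp
      ring
    rw [hideq]
    apply div_nonneg _ h3.le
    linarith
  have := ge_of_tendsto hGlim hfinal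
  have haz : 0 ≤ a * z.re := mul_nonneg ha hzre.le
  linarith
end
end

section
/- Let h : Π → ℂ be univalent, h(1) = 0, convex in the positive direction of the real axis with h⁻¹(h(z)+t) → ∞ as t → ∞ for each z, and suppose h(z) + Ω(θ₁,θ₂) ⊂ h(Π) for all z ∈ Π, where Ω(θ₁,θ₂) = {ζ ≠ 0 : −θ₁ < arg ζ < θ₂} with θ₁, θ₂ > 0, θ₁ + θ₂ ≤ π. Then for every θ ∈ (−θ₁, θ₂), h is convex in direction e^{iθ}: for each z ∈ Π, h(z) + t e^{iθ} ∈ h(Π) for all t > 0 and lim_{t→∞} h⁻¹(h(z) + t e^{iθ}) = ∞. -/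
open Filter Set MeasureTheory

noncomputable section

/-- The open sector `Ω(θ₁,θ₂) = {ζ ≠ 0 : −θ₁ < arg ζ < θ₂}`. -/
def Sector (θ₁ θ₂ : ℝ) : Set ℂ := {ζ : ℂ | ζ ≠ 0 ∧ -θ₁ < Complex.arg ζ ∧ Complex.arg ζ < θ₂}

/-- `h` is convex in the direction `e^{iθ}`: the image domain is invariant under translations
by `t e^{iθ}` (`t > 0`) and `h⁻¹(h(z)+t e^{iθ}) → ∞` as `t → ∞`. -/
def ConvexInDir (h : ℂ → ℂ) (θ : ℝ) : Prop :=
  (∀ z ∈ HP, ∀ t : ℝ, 0 < t → h z + t * Complex.exp (θ * Complex.I) ∈ h '' HP) ∧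
  (∀ z ∈ HP, ∀ w : ℝ → ℂ,
    (∀ t : ℝ, 0 < t → w t ∈ HP ∧ h (w t) = h z + t * Complex.exp (θ * Complex.I)) →
    Tendsto (fun t : ℝ => ‖w t‖) atTop atTop)

/-! ### Auxiliary material for the proof -/

namespace Stmt4Aux

lemma hp_isOpen : IsOpen HP := isOpen_lt continuous_const Complex.continuous_re

lemma im_real_mul_exp (r x : ℝ) : ((r : ℂ) * Complex.exp (x * Complex.I)).im = r * Real.sin x := by
  simp [Complex.mul_im, Complex.exp_ofReal_mul_I_im, Complex.exp_ofReal_mul_I_re]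

lemma im_mul_exp (v : ℂ) (x : ℝ) :
    (v * Complex.exp (x * Complex.I)).im = ‖v‖ * Real.sin (Complex.arg v + x) := by
  conv_lhs => rw [← Complex.norm_mul_exp_arg_mul_I v]
  rw [mul_assoc, ← Complex.exp_add]
  have : (Complex.arg v : ℂ) * Complex.I + (x : ℂ) * Complex.I
      = ((Complex.arg v + x : ℝ) : ℂ) * Complex.I := by push_cast; ring
  rw [this, im_real_mul_exp]

lemma mem_sector {θ₁ θ₂ : ℝ} (hθ₁ : 0 < θ₁) (hθ₂ : 0 < θ₂) (hsum : θ₁ + θ₂ ≤ Real.pi)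
    {v : ℂ} (h1 : 0 < (v * Complex.exp (θ₁ * Complex.I)).im)
    (h2 : (v * Complex.exp ((-θ₂ : ℝ) * Complex.I)).im < 0) : v ∈ Sector θ₁ θ₂ := by
  have hv : v ≠ 0 := by rintro rfl; simp at h1
  have habs : 0 < ‖v‖ := by
    simpa using hv
  have hπ := Real.pi_pos
  have harg1 : -Real.pi < Complex.arg v := Complex.neg_pi_lt_arg v
  have harg2 : Complex.arg v ≤ Real.pi := Complex.arg_le_pi v
  rw [im_mul_exp] at h1 h2
  have hs1 : 0 < Real.sin (Complex.arg v + θ₁) := by nlinarith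
  have hs2 : Real.sin (Complex.arg v + -θ₂) < 0 := by nlinarith
  refine ⟨hv, ?_, ?_⟩
  · by_contra hle
    push_neg at hle
    have : Real.sin (Complex.arg v + θ₁) ≤ 0 :=
      Real.sin_nonpos_of_nonpos_of_neg_pi_le (by linarith) (by linarith)
    linarith
  · by_contra hle
    push_neg at hle
    have : 0 ≤ Real.sin (Complex.arg v + -θ₂) :=
      Real.sin_nonneg_of_nonneg_of_le_pi (by linarith) (by linarith)
    linarith

lemma sector_ball {θ₁ θ₂ θ t : ℝ} (hθ₁ : 0 < θ₁) (hθ₂ : 0 < θ₂) (hsum : θ₁ + θ₂ ≤ Real.pi)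
    (hl : -θ₁ < θ) (hr : θ < θ₂) (ht : 0 < t) {δ : ℂ}
    (hδ : ‖δ‖ < min (Real.sin (θ + θ₁)) (Real.sin (θ₂ - θ)) * t) :
    (t : ℂ) * Complex.exp (θ * Complex.I) + δ ∈ Sector θ₁ θ₂ := by
  have hmin1 : min (Real.sin (θ + θ₁)) (Real.sin (θ₂ - θ)) ≤ Real.sin (θ + θ₁) := min_le_left _ _
  have hmin2 : min (Real.sin (θ + θ₁)) (Real.sin (θ₂ - θ)) ≤ Real.sin (θ₂ - θ) := min_le_right _ _
  have habsδ : 0 ≤ ‖δ‖ := norm_nonneg δ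
  apply mem_sector hθ₁ hθ₂ hsum
  · have e : ((t : ℂ) * Complex.exp (θ * Complex.I) + δ) * Complex.exp (θ₁ * Complex.I)
        = (t : ℂ) * Complex.exp (((θ + θ₁ : ℝ) : ℂ) * Complex.I)
          + δ * Complex.exp (θ₁ * Complex.I) := by
      have h2 : Complex.exp (((θ + θ₁ : ℝ) : ℂ) * Complex.I)
          = Complex.exp ((θ : ℂ) * Complex.I) * Complex.exp ((θ₁ : ℂ) * Complex.I) := by
        rw [← Complex.exp_add]
        congr 1
        push_cast
        ring
      rw [h2]
      ring
    rw [e, Complex.add_im, im_real_mul_exp]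
    have h3 : -(‖δ‖) ≤ (δ * Complex.exp (θ₁ * Complex.I)).im := by
      have h4 := Complex.abs_im_le_norm (δ * Complex.exp (θ₁ * Complex.I))
      have h5 : ‖δ * Complex.exp (θ₁ * Complex.I)‖ = ‖δ‖ := by
        rw [norm_mul, Complex.norm_exp_ofReal_mul_I, mul_one]
      rw [h5] at h4
      have := neg_le_of_abs_le h4
      linarith
    nlinarith
  · have e : ((t : ℂ) * Complex.exp (θ * Complex.I) + δ) * Complex.exp ((-θ₂ : ℝ) * Complex.I)
        = (t : ℂ) * Complex.exp (((θ - θ₂ : ℝ) : ℂ) * Complex.I)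
          + δ * Complex.exp ((-θ₂ : ℝ) * Complex.I) := by
      have h2 : Complex.exp (((θ - θ₂ : ℝ) : ℂ) * Complex.I)
          = Complex.exp ((θ : ℂ) * Complex.I) * Complex.exp (((-θ₂ : ℝ) : ℂ) * Complex.I) := by
        rw [← Complex.exp_add]
        congr 1
        push_cast
        ring
      rw [h2]
      ring
    rw [e, Complex.add_im, im_real_mul_exp]
    have h3 : (δ * Complex.exp ((-θ₂ : ℝ) * Complex.I)).im ≤ ‖δ‖ := by
      have h4 := Complex.abs_im_le_norm (δ * Complex.exp ((-θ₂ : ℝ) * Complex.I))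
      have h5 : ‖δ * Complex.exp ((-θ₂ : ℝ) * Complex.I)‖ = ‖δ‖ := by
        rw [norm_mul, Complex.norm_exp_ofReal_mul_I, mul_one]
      rw [h5] at h4
      exact le_of_abs_le h4
    have hsin : Real.sin (θ - θ₂) = -Real.sin (θ₂ - θ) := by
      rw [← Real.sin_neg]; ring_nf
    nlinarith

lemma sin_c2_pos {θ₁ θ₂ θ : ℝ} (hθ₁ : 0 < θ₁) (hθ₂ : 0 < θ₂) (hsum : θ₁ + θ₂ ≤ Real.pi)
    (hl : -θ₁ < θ) (hr : θ < θ₂) :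
    0 < min (Real.sin (θ + θ₁)) (Real.sin (θ₂ - θ)) :=
  lt_min (Real.sin_pos_of_pos_of_lt_pi (by linarith) (by linarith))
    (Real.sin_pos_of_pos_of_lt_pi (by linarith) (by linarith))

lemma min_sin_le {x p q : ℝ} (hp : 0 ≤ p) (hq : q ≤ Real.pi) (hpx : p ≤ x) (hxq : x ≤ q) :
    min (Real.sin p) (Real.sin q) ≤ Real.sin x := by
  have hπ := Real.pi_pos
  rcases le_total x (Real.pi / 2) with hx | hx
  · refine min_le_of_left_le ?_
    exact Real.strictMonoOn_sin.monotoneOn ⟨by linarith, by linarith⟩ ⟨by linarith, hx⟩ hpx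
  · refine min_le_of_right_le ?_
    have e1 : Real.sin q = Real.sin (Real.pi - q) := (Real.sin_pi_sub q).symm
    have e2 : Real.sin x = Real.sin (Real.pi - x) := (Real.sin_pi_sub x).symm
    rw [e1, e2]
    exact Real.strictMonoOn_sin.monotoneOn ⟨by linarith, by linarith⟩
      ⟨by linarith, by linarith⟩ (by linarith)

/-- Choice inverse of `h` on the half-plane. -/
def ginv (h : ℂ → ℂ) : ℂ → ℂ := Function.invFunOn h HP

section Inverse

variable {h : ℂ → ℂ}

lemma ginv_mem {q : ℂ} (hq : q ∈ h '' HP) : ginv h q ∈ HP := by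
  rcases hq with ⟨a, ha, rfl⟩
  exact Function.invFunOn_mem ⟨a, ha, rfl⟩

lemma ginv_map {q : ℂ} (hq : q ∈ h '' HP) : h (ginv h q) = q := by
  rcases hq with ⟨a, ha, rfl⟩
  exact Function.invFunOn_eq ⟨a, ha, rfl⟩

lemma ginv_left (hinj : InjOn h HP) {u : ℂ} (hu : u ∈ HP) : ginv h (h u) = u :=
  hinj.leftInvOn_invFunOn hu

variable (hholo : DifferentiableOn ℂ h HP) (hinj : InjOn h HP)
include hholo hinj

lemma nhds_le_map (a : ℂ) (ha : a ∈ HP) : nhds (h a) ≤ Filter.map h (nhds a) := by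
  have hA : AnalyticAt ℂ h a := hholo.analyticAt (hp_isOpen.mem_nhds ha)
  rcases hA.eventually_constant_or_nhds_le_map_nhds with hc | hle
  · exfalso
    rcases Metric.eventually_nhds_iff_ball.mp (hc.and (hp_isOpen.eventually_mem ha))
      with ⟨r, hr, hball⟩
    have hmem : a + (r : ℂ) / 2 ∈ Metric.ball a r := by
      have : dist (a + (r : ℂ) / 2) a = r / 2 := by
        rw [dist_eq_norm]
        simp [abs_of_pos hr]
      rw [Metric.mem_ball, this]
      linarith
    obtain ⟨hval, hHP⟩ := hball _ hmem
    have := hinj hHP ha hval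
    have hr0 : (r : ℂ) / 2 = 0 := by
      have := add_eq_left.mp this
      exact this
    simp at hr0
    linarith
  · exact hle

lemma image_mem_nhds {s : Set ℂ} {a : ℂ} (hs : s ∈ nhds a) (ha : a ∈ HP) :
    h '' s ∈ nhds (h a) :=
  nhds_le_map hholo hinj a ha (Filter.image_mem_map hs)

lemma ginv_contAt (a : ℂ) (ha : a ∈ HP) : ContinuousAt (ginv h) (h a) := by
  have : Tendsto (ginv h) (nhds (h a)) (nhds a) := by
    rw [Metric.tendsto_nhds]
    intro ε hε
    have hU : Metric.ball a ε ∩ HP ∈ nhds a :=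
      Filter.inter_mem (Metric.ball_mem_nhds a hε) (hp_isOpen.mem_nhds ha)
    filter_upwards [image_mem_nhds hholo hinj hU ha] with q hq
    rcases hq with ⟨u, ⟨hu1, hu2⟩, rfl⟩
    rw [ginv_left hinj hu2]
    exact hu1
  rw [ContinuousAt, ginv_left hinj ha]
  exact this

lemma ginv_diffAt_of_deriv (a : ℂ) (ha : a ∈ HP) (hd : deriv h a ≠ 0) :
    DifferentiableAt ℂ (ginv h) (h a) := by
  have hA : AnalyticAt ℂ h a := hholo.analyticAt (hp_isOpen.mem_nhds ha)
  rcases hA with ⟨p, hp⟩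
  have hs : HasStrictDerivAt h (deriv h a) a := by
    have h1 := hp.hasStrictDerivAt
    rwa [← hp.deriv] at h1
  have hg : ∀ᶠ x in nhds a, ginv h (h x) = x := by
    filter_upwards [hp_isOpen.eventually_mem ha] with x hx
    exact ginv_left hinj hx
  exact (hs.to_local_left_inverse hd hg).hasDerivAt.differentiableAt

lemma ginv_diffOn : DifferentiableOn ℂ (ginv h) (h '' HP) := by
  rintro q hq
  rcases hq with ⟨a, ha, rfl⟩
  suffices hda : DifferentiableAt ℂ (ginv h) (h a) from hda.differentiableWithinAt
  by_cases hd : deriv h a ≠ 0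
  · exact ginv_diffAt_of_deriv hholo hinj a ha hd
  push_neg at hd
  have hA' : AnalyticAt ℂ (deriv h) a := ((hholo.analyticOnNhd hp_isOpen).deriv) a ha
  rcases hA'.eventually_eq_zero_or_eventually_ne_zero with hz | hnz
  · exfalso
    rcases Metric.eventually_nhds_iff_ball.mp (hz.and (hp_isOpen.eventually_mem ha))
      with ⟨r, hr, hball⟩
    have hmem0 : a ∈ Metric.ball a r := Metric.mem_ball_self hr
    have hmem : a + (r : ℂ) / 2 ∈ Metric.ball a r := by
      have : dist (a + (r : ℂ) / 2) a = r / 2 := by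
        rw [dist_eq_norm]
        simp [abs_of_pos hr]
      rw [Metric.mem_ball, this]
      linarith
    have hzero : ∀ x ∈ Metric.ball a r, fderivWithin ℂ h (Metric.ball a r) x = 0 := by
      intro x hx
      rw [fderivWithin_of_isOpen Metric.isOpen_ball hx]
      apply ContinuousLinearMap.ext_ring
      rw [fderiv_apply_one_eq_deriv, (hball x hx).1]
      simp
    have hconst : h (a + (r : ℂ) / 2) = h a :=
      (convex_ball a r).is_const_of_fderivWithin_eq_zero
        (hholo.mono fun x hx => (hball x hx).2) hzero hmem hmem0
    have heq := hinj (hball _ hmem).2 ha hconst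
    have hr0 : (r : ℂ) / 2 = 0 := add_eq_left.mp heq
    simp at hr0
    linarith
  · have h1 : ∀ᶠ x in nhds a, x ≠ a → deriv h x ≠ 0 := by
      have := eventually_nhdsWithin_iff.mp hnz
      filter_upwards [this] with x hx hxa
      exact hx hxa
    rcases Metric.eventually_nhds_iff_ball.mp (h1.and (hp_isOpen.eventually_mem ha))
      with ⟨r, hr, hball⟩
    have hV : h '' Metric.ball a r ∈ nhds (h a) :=
      image_mem_nhds hholo hinj (Metric.ball_mem_nhds a hr) ha
    have key : DifferentiableOn ℂ (ginv h) ((h '' Metric.ball a r) \ {h a}) := by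
      rintro q' ⟨⟨u, hu, rfl⟩, hne⟩
      have huH : u ∈ HP := (hball u hu).2
      have hune : u ≠ a := by
        rintro rfl
        exact hne rfl
      exact (ginv_diffAt_of_deriv hholo hinj u huH
        ((hball u hu).1 hune)).differentiableWithinAt
    have hfull : DifferentiableOn ℂ (ginv h) (h '' Metric.ball a r) :=
      (Complex.differentiableOn_compl_singleton_and_continuousAt_iff hV).mp
        ⟨key, ginv_contAt hholo hinj a ha⟩
    exact hfull.differentiableAt hV

end Inverse

/-- A Schwarz–Pick style bound: a holomorphic function on a disc with values in the right
half-plane is bounded by three times its central value on the half-radius disc. -/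
lemma schwarz_bound {g : ℂ → ℂ} {c : ℂ} {R : ℝ} (hR : 0 < R)
    (hd : DifferentiableOn ℂ g (Metric.ball c R))
    (hmaps : ∀ q ∈ Metric.ball c R, g q ∈ HP)
    {P : ℂ} (hP : dist P c ≤ R / 2) :
    ‖g P‖ ≤ 3 * ‖g c‖ := by
  have hcmem : c ∈ Metric.ball c R := Metric.mem_ball_self hR
  have hPmem : P ∈ Metric.ball c R := by
    rw [Metric.mem_ball]
    linarith
  set a := g c with ha
  have haH : 0 < a.re := hmaps c hcmem
  have hden : ∀ q ∈ Metric.ball c R, g q + (starRingEnd ℂ) a ≠ 0 := by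
    intro q hq heq
    have h1 : 0 < (g q).re := hmaps q hq
    have h2 := congrArg Complex.re heq
    simp only [Complex.add_re, Complex.conj_re, Complex.zero_re] at h2
    linarith
  set φ := fun q => (g q - a) / (g q + (starRingEnd ℂ) a) with hφ
  have hφd : DifferentiableOn ℂ φ (Metric.ball c R) :=
    (hd.sub (differentiableOn_const a)).div (hd.add (differentiableOn_const _)) hden
  have hlt : ∀ q ∈ Metric.ball c R,
      ‖g q - a‖ < ‖g q + (starRingEnd ℂ) a‖ := by
    intro q hq
    have h1 : 0 < (g q).re := hmaps q hq
    rw [Complex.norm_def, Complex.norm_def]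
    apply Real.sqrt_lt_sqrt (Complex.normSq_nonneg _)
    simp only [Complex.normSq_apply, Complex.sub_re, Complex.sub_im, Complex.add_re,
      Complex.add_im, Complex.conj_re, Complex.conj_im]
    nlinarith
  have hφ0 : φ c = 0 := by simp [hφ, ha]
  have hφmaps : MapsTo φ (Metric.ball c R) (Metric.ball (φ c) 1) := by
    intro q hq
    rw [hφ0, Metric.mem_ball, dist_zero_right, hφ]
    rw [norm_div]
    rw [div_lt_one (norm_pos_iff.mpr (hden q hq))]
    exact hlt q hq
  have hs := Complex.dist_le_div_mul_dist_of_mapsTo_ball hφd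
    (hφmaps.mono_right Metric.ball_subset_closedBall) hPmem
  rw [hφ0, dist_zero_right] at hs
  have hφP : ‖φ P‖ ≤ 1 / 2 := by
    have : (1 : ℝ) / R * dist P c ≤ 1 / R * (R / 2) := by
      apply mul_le_mul_of_nonneg_left hP
      positivity
    have hRR : (1 : ℝ) / R * (R / 2) = 1 / 2 := by
      field_simp
    linarith
  have hid : g P - a = φ P * (g P + (starRingEnd ℂ) a) :=
    (div_mul_cancel₀ _ (hden P hPmem)).symm
  have htri : ‖g P‖ ≤ ‖a‖ + ‖g P - a‖ := by
    conv_lhs => rw [show g P = a + (g P - a) by ring]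
    exact norm_add_le _ _
  have htri2 : ‖g P + (starRingEnd ℂ) a‖ ≤ ‖g P‖ + ‖a‖ := by
    have := norm_add_le (g P) ((starRingEnd ℂ) a)
    rwa [Complex.norm_conj] at this
  have hprod : ‖g P - a‖ ≤ 1 / 2 * (‖g P‖ + ‖a‖) := by
    rw [hid, norm_mul]
    apply mul_le_mul hφP htri2 (norm_nonneg _)
    linarith
  linarith

/-- The escape property of `h` in direction `e^{iθ}`. -/
def Esc (h : ℂ → ℂ) (θ : ℝ) : Prop :=
  ∀ z ∈ HP, ∀ w : ℝ → ℂ,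
    (∀ t : ℝ, 0 < t → w t ∈ HP ∧ h (w t) = h z + t * Complex.exp (θ * Complex.I)) →
    Tendsto (fun t : ℝ => ‖w t‖) atTop atTop

lemma abs_sin_eq {σ : ℝ} (hpi : |σ| ≤ Real.pi) : |Real.sin σ| = Real.sin |σ| := by
  rcases le_or_gt 0 σ with hσ | hσ
  · rw [abs_of_nonneg hσ] at hpi ⊢
    exact abs_of_nonneg (Real.sin_nonneg_of_nonneg_of_le_pi hσ hpi)
  · rw [abs_of_neg hσ] at hpi ⊢
    rw [show Real.sin σ = -Real.sin (-σ) by rw [Real.sin_neg]; ring, abs_neg]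
    exact abs_of_nonneg (Real.sin_nonneg_of_nonneg_of_le_pi (by linarith) hpi)

/-- The key step: escape in direction `β` propagates to a nearby direction `θ`. -/
lemma esc_step {h : ℂ → ℂ} {θ₁ θ₂ : ℝ} (hθ₁ : 0 < θ₁) (hθ₂ : 0 < θ₂)
    (hsum : θ₁ + θ₂ ≤ Real.pi)
    (hholo : DifferentiableOn ℂ h HP) (hinj : InjOn h HP)
    (hsec : ∀ z ∈ HP, ∀ ζ ∈ Sector θ₁ θ₂, h z + ζ ∈ h '' HP)
    {β θ : ℝ} (hβl : -θ₁ < β) (hβr : β < θ₂) (hθl : -θ₁ < θ) (hθr : θ < θ₂)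
    (hσ : |θ - β| < Real.pi / 2)
    (hsin : Real.sin |θ - β| ≤ min (Real.sin (θ + θ₁)) (Real.sin (θ₂ - θ)) / 2)
    (hEβ : Esc h β) : Esc h θ := by
  intro z hz w hw
  by_contra hnot
  set c₂ := min (Real.sin (θ + θ₁)) (Real.sin (θ₂ - θ)) with hc₂def
  have hc₂ : 0 < c₂ := sin_c2_pos hθ₁ hθ₂ hsum hθl hθr
  set σ := θ - β with hσdef
  have habs := abs_lt.mp hσ
  have hcos : 0 < Real.cos σ := Real.cos_pos_of_mem_Ioo ⟨habs.1, habs.2⟩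
  rw [tendsto_atTop_atTop] at hnot
  push_neg at hnot
  obtain ⟨M, hM⟩ := hnot
  have hgd : DifferentiableOn ℂ (ginv h) (h '' HP) := ginv_diffOn hholo hinj
  have hβc : 0 < min (Real.sin (β + θ₁)) (Real.sin (θ₂ - β)) :=
    sin_c2_pos hθ₁ hθ₂ hsum hβl hβr
  have hray : ∀ s : ℝ, 0 < s → h z + (s : ℂ) * Complex.exp (β * Complex.I) ∈ h '' HP := by
    intro s hs
    have hmem : (s : ℂ) * Complex.exp (β * Complex.I) + 0 ∈ Sector θ₁ θ₂ :=
      sector_ball hθ₁ hθ₂ hsum hβl hβr hs (by simpa using mul_pos hβc hs)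
    rw [add_zero] at hmem
    exact hsec z hz _ hmem
  set u : ℝ → ℂ :=
    fun s => if 0 < s then ginv h (h z + (s : ℂ) * Complex.exp (β * Complex.I)) else 1 with hu
  have huspec : ∀ s : ℝ, 0 < s →
      u s ∈ HP ∧ h (u s) = h z + (s : ℂ) * Complex.exp (β * Complex.I) := by
    intro s hs
    rw [hu]
    simp only [if_pos hs]
    exact ⟨ginv_mem (hray s hs), ginv_map (hray s hs)⟩
  have htends := hEβ z hz u huspec
  rw [tendsto_atTop_atTop] at htends
  obtain ⟨S, hS⟩ := htends (3 * M + 1)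
  obtain ⟨t, ht, hwt⟩ := hM (max 1 ((|S| + 1) / Real.cos σ))
  have ht1 : (1 : ℝ) ≤ t := le_trans (le_max_left _ _) ht
  have ht0 : 0 < t := lt_of_lt_of_le one_pos ht1
  have hts : |S| + 1 ≤ t * Real.cos σ := by
    have h1 : (|S| + 1) / Real.cos σ ≤ t := le_trans (le_max_right _ _) ht
    rwa [div_le_iff₀ hcos] at h1
  set q := h z + (t : ℂ) * Complex.exp (θ * Complex.I) with hq
  have hball : Metric.ball q (c₂ * t) ⊆ h '' HP := by
    intro x hx
    have hδ : ‖x - q‖ < c₂ * t := by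
      rwa [Metric.mem_ball, Complex.dist_eq] at hx
    have hmem : (t : ℂ) * Complex.exp (θ * Complex.I) + (x - q) ∈ Sector θ₁ θ₂ :=
      sector_ball hθ₁ hθ₂ hsum hθl hθr ht0 hδ
    have := hsec z hz _ hmem
    have hx_eq : h z + ((t : ℂ) * Complex.exp (θ * Complex.I) + (x - q)) = x := by
      rw [hq]; ring
    rwa [hx_eq] at this
  have hwt_mem := (hw t ht0).1
  have hq_eq : h (w t) = q := (hw t ht0).2
  have hgq : ginv h q = w t := by rw [← hq_eq, ginv_left hinj hwt_mem]
  set s₀ := t * Real.cos σ with hs₀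
  have hs₀pos : 0 < s₀ := mul_pos ht0 hcos
  set P := h z + (s₀ : ℂ) * Complex.exp (β * Complex.I) with hP
  have hexp : Complex.exp ((θ : ℂ) * Complex.I)
      = Complex.exp ((β : ℂ) * Complex.I) * Complex.exp ((σ : ℂ) * Complex.I) := by
    rw [← Complex.exp_add]
    congr 1
    rw [hσdef]
    push_cast
    ring
  have hPq : P - q = (t : ℂ) * Complex.exp (β * Complex.I)
      * (((Real.cos σ : ℝ) : ℂ) - Complex.exp ((σ : ℂ) * Complex.I)) := by
    rw [hP, hq, hexp, hs₀]
    push_cast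
    ring
  have hdist : dist P q = t * |Real.sin σ| := by
    rw [Complex.dist_eq, hPq]
    have hcs : ((Real.cos σ : ℝ) : ℂ) - Complex.exp ((σ : ℂ) * Complex.I)
        = -(((Real.sin σ : ℝ) : ℂ) * Complex.I) := by
      rw [Complex.exp_mul_I, ← Complex.ofReal_cos, ← Complex.ofReal_sin]
      ring
    rw [hcs, norm_mul, norm_mul, norm_neg, norm_mul,
      Complex.norm_exp_ofReal_mul_I, Complex.norm_real, Complex.norm_real, Real.norm_eq_abs,
      Real.norm_eq_abs, Complex.norm_I,
      abs_of_pos ht0]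
    ring
  have hdist2 : dist P q ≤ c₂ * t / 2 := by
    rw [hdist]
    have : |Real.sin σ| ≤ c₂ / 2 := by
      rw [abs_sin_eq (by linarith [Real.pi_pos])]
      exact hsin
    nlinarith
  have hbound := schwarz_bound (mul_pos hc₂ ht0) (hgd.mono hball)
    (fun x hx => ginv_mem (hball hx)) hdist2
  rw [hgq] at hbound
  have hus : u s₀ = ginv h P := by
    rw [hu]
    simp only [if_pos hs₀pos, hP]
  have hSs : S ≤ s₀ := by
    have : S ≤ |S| := le_abs_self S
    rw [hs₀]
    linarith
  have hfar := hS s₀ hSs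
  rw [hus] at hfar
  have hwtM : ‖w t‖ ≤ M := le_of_lt hwt
  linarith

end Stmt4Aux

open Stmt4Aux in
/-- If a univalent function, convex in the positive direction of the real axis, satisfies
`h(z) + Ω(θ₁,θ₂) ⊂ h(Π)`, then `h` is convex in every direction `e^{iθ}`, `θ ∈ (−θ₁,θ₂)`. -/
theorem stmt4 (h : ℂ → ℂ) (θ₁ θ₂ : ℝ) (hθ₁ : 0 < θ₁) (hθ₂ : 0 < θ₂)
    (hsum : θ₁ + θ₂ ≤ Real.pi)
    (hholo : DifferentiableOn ℂ h HP) (hinj : InjOn h HP) (hnorm : h 1 = 0)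
    (hconv : ConvexInDir h 0)
    (hsec : ∀ z ∈ HP, ∀ ζ ∈ Sector θ₁ θ₂, h z + ζ ∈ h '' HP) :
    ∀ θ : ℝ, -θ₁ < θ → θ < θ₂ → ConvexInDir h θ := by
  intro θ hθl hθr
  have hπ := Real.pi_pos
  constructor
  · intro z hz t ht
    apply hsec z hz
    have hc := sin_c2_pos hθ₁ hθ₂ hsum hθl hθr
    have hmem : (t : ℂ) * Complex.exp (θ * Complex.I) + 0 ∈ Sector θ₁ θ₂ :=
      sector_ball hθ₁ hθ₂ hsum hθl hθr ht (by simpa using mul_pos hc ht)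
    rwa [add_zero] at hmem
  · show Esc h θ
    set a := min θ 0 with hadef
    set b := max θ 0 with hbdef
    have hal : -θ₁ < a := lt_min hθl (by linarith)
    have hbr : b < θ₂ := max_lt hθr (by linarith)
    have ha0 : a ≤ 0 := min_le_right _ _
    have hb0 : 0 ≤ b := le_max_right _ _
    have haθ : a ≤ θ := min_le_left _ _
    have hθb : θ ≤ b := le_max_left _ _
    set ε := min (min (Real.sin (a + θ₁)) (Real.sin (b + θ₁)))
      (min (Real.sin (θ₂ - b)) (Real.sin (θ₂ - a))) with hεdef
    have hεpos : 0 < ε := by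
      refine lt_min (lt_min ?_ ?_) (lt_min ?_ ?_) <;>
        apply Real.sin_pos_of_pos_of_lt_pi <;> linarith
    have hεbound : ∀ φ, a ≤ φ → φ ≤ b →
        ε ≤ min (Real.sin (φ + θ₁)) (Real.sin (θ₂ - φ)) := by
      intro φ h1 h2
      refine le_min ?_ ?_
      · refine le_trans (min_le_left _ _) ?_
        exact min_sin_le (by linarith) (by linarith) (by linarith) (by linarith)
      · refine le_trans (min_le_right _ _) ?_
        exact min_sin_le (by linarith) (by linarith) (by linarith) (by linarith)
    obtain ⟨N₀, hN₀⟩ := exists_nat_ge (|θ| / min (ε / 2) 1)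
    set N := N₀ + 1 with hNdef
    have hNpos : 0 < ((N : ℕ) : ℝ) := by
      rw [hNdef]
      push_cast
      positivity
    set δ := θ / ((N : ℕ) : ℝ) with hδdef
    have hmin : 0 < min (ε / 2) 1 := lt_min (by linarith) one_pos
    have hδle : |δ| ≤ min (ε / 2) 1 := by
      rw [hδdef, abs_div, abs_of_pos hNpos, div_le_iff₀ hNpos]
      have h1 : |θ| ≤ min (ε / 2) 1 * (N₀ : ℝ) := by
        rw [← div_le_iff₀' hmin]
        exact hN₀
      have h2 : (N₀ : ℝ) ≤ ((N : ℕ) : ℝ) := by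
        rw [hNdef]
        push_cast
        linarith
      nlinarith
    have hδhalf : |δ| < Real.pi / 2 := by
      have h1 : |δ| ≤ 1 := hδle.trans (min_le_right _ _)
      have h3 := Real.pi_gt_three
      linarith
    have hsinδ : Real.sin |δ| ≤ ε / 2 := by
      have h1 : Real.sin |δ| ≤ |δ| := by
        rcases eq_or_lt_of_le (abs_nonneg δ) with h | h
        · rw [← h]
          simp
        · exact (Real.sin_lt h).le
      exact h1.trans (hδle.trans (min_le_left _ _))
    have hNδ : ((N : ℕ) : ℝ) * δ = θ := by
      rw [hδdef]
      field_simp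
    have hk_mem : ∀ k : ℕ, k ≤ N → a ≤ (k : ℝ) * δ ∧ (k : ℝ) * δ ≤ b := by
      intro k hk
      have hkN : ((k : ℕ) : ℝ) ≤ ((N : ℕ) : ℝ) := Nat.cast_le.mpr hk
      have hk0 : (0 : ℝ) ≤ (k : ℝ) := Nat.cast_nonneg k
      rcases le_or_gt 0 θ with hθ0 | hθ0
      · have hδ0 : 0 ≤ δ := by
          rw [hδdef]
          positivity
        constructor
        · have : (0 : ℝ) ≤ (k : ℝ) * δ := by positivity
          linarith
        · have h1 : (k : ℝ) * δ ≤ ((N : ℕ) : ℝ) * δ := mul_le_mul_of_nonneg_right hkN hδ0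
          rw [hNδ] at h1
          have : θ ≤ b := hθb
          linarith
      · have hδ0 : δ ≤ 0 := by
          rw [hδdef]
          exact div_nonpos_of_nonpos_of_nonneg hθ0.le hNpos.le
        constructor
        · have h1 : ((N : ℕ) : ℝ) * δ ≤ (k : ℝ) * δ := mul_le_mul_of_nonpos_right hkN hδ0
          rw [hNδ] at h1
          linarith
        · have : (k : ℝ) * δ ≤ 0 := mul_nonpos_of_nonneg_of_nonpos hk0 hδ0
          linarith
    have hEsc : ∀ k : ℕ, k ≤ N → Esc h ((k : ℝ) * δ) := by
      intro k
      induction k with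
      | zero =>
        intro _
        have h0 : ((0 : ℕ) : ℝ) * δ = 0 := by simp
        rw [h0]
        exact hconv.2
      | succ k ih =>
        intro hk1
        have hk : k ≤ N := Nat.le_of_succ_le hk1
        have hEk := ih hk
        obtain ⟨hak, hkb⟩ := hk_mem k hk
        obtain ⟨hak1, hk1b⟩ := hk_mem (k + 1) hk1
        have hdd : ((k + 1 : ℕ) : ℝ) * δ - (k : ℝ) * δ = δ := by
          push_cast
          ring
        refine esc_step hθ₁ hθ₂ hsum hholo hinj hsec
          (β := (k : ℝ) * δ) (θ := ((k + 1 : ℕ) : ℝ) * δ)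
          (by linarith) (by linarith) (by linarith) (by linarith) ?_ ?_ hEk
        · rw [hdd]
          exact hδhalf
        · rw [hdd]
          refine hsinδ.trans ?_
          have := hεbound (((k + 1 : ℕ) : ℝ) * δ) hak1 hk1b
          linarith
    have hfin := hEsc N le_rfl
    rwa [hNδ] at hfin

end
end

section
/- Let h : Π → ℂ be univalent with h(1)=0 belonging to Σ(Π, θ₁, θ₂), i.e., h is convex in direction e^{iθ} for every θ ∈ (−θ₁, θ₂). Then the formula F_ζ(z) := h⁻¹(h(z) + ζ) defines a well-defined family of holomorphic self-maps of Π for ζ ∈ Ω(θ₁,θ₂) = {ζ : −θ₁ < arg ζ < θ₂}, holomorphic in ζ, satisfying the semigroup property F_{ζ₁} ∘ F_{ζ₂} = F_{ζ₁+ζ₂} for all ζ₁, ζ₂ ∈ Ω(θ₁,θ₂), and F_{t e^{iθ}}(z) → ∞ as t → ∞ for every θ ∈ (−θ₁, θ₂) and z ∈ Π. -/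
open Filter Set MeasureTheory

noncomputable section

open Complex in
private lemma inj_deriv_ne_zero {f : ℂ → ℂ} {s : Set ℂ} {z₀ : ℂ} (hf : AnalyticAt ℂ f z₀)
    (hs : s ∈ nhds z₀) (hinj : InjOn f s) : deriv f z₀ ≠ 0 := by
  intro hd0
  set F : ℂ → ℂ := fun z => f z - f z₀ with hFdef
  have hF : AnalyticAt ℂ F z₀ := hf.sub analyticAt_const
  have hF0 : F z₀ = 0 := by simp [hFdef]
  have hz₀s : z₀ ∈ s := mem_of_mem_nhds hs
  -- F is not eventually zero
  have hne : ¬ ∀ᶠ z in nhds z₀, F z = 0 := by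
    intro hev
    obtain ⟨ε, hε, hball⟩ := Metric.mem_nhds_iff.mp
      (Filter.inter_mem hs hev : s ∩ {z | F z = 0} ∈ nhds z₀)
    have hmem : z₀ + ((ε/2 : ℝ) : ℂ) ∈ Metric.ball z₀ ε := by
      rw [Metric.mem_ball, Complex.dist_eq]
      simp only [add_sub_cancel_left, Complex.norm_real, Real.norm_eq_abs]
      rw [abs_of_pos (by linarith)]; linarith
    obtain ⟨h1, h2⟩ := hball hmem
    have : z₀ + ((ε/2 : ℝ) : ℂ) = z₀ := hinj h1 hz₀s (by
      have : f (z₀ + ((ε/2 : ℝ) : ℂ)) - f z₀ = 0 := h2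
      linear_combination this)
    have : ((ε/2 : ℝ) : ℂ) = 0 := by linear_combination this
    have : (ε/2 : ℝ) = 0 := by exact_mod_cast this
    linarith
  have hordne : analyticOrderAt F z₀ ≠ ⊤ := fun h0 => hne (analyticOrderAt_eq_top.mp h0)
  obtain ⟨n, hn⟩ := WithTop.ne_top_iff_exists.mp hordne
  obtain ⟨g, hg_an, hg0, hfeq⟩ := (hF.analyticOrderAt_eq_natCast (n := n)).mp hn.symm
  -- n ≠ 0
  have hn0 : n ≠ 0 := by
    rintro rfl
    have := hfeq.self_of_nhds
    simp [hF0] at this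
    exact hg0 this.symm
  -- n ≠ 1
  have hn1 : n ≠ 1 := by
    rintro rfl
    have hd : HasDerivAt (fun z => (z - z₀) ^ 1 • g z) (g z₀) z₀ := by
      have := ((hasDerivAt_id z₀).sub_const z₀).mul hg_an.differentiableAt.hasDerivAt
      simp only [pow_one, smul_eq_mul]
      convert this using 1
      · rfl
      · rfl
      · rfl
      · simp
    have hdF : deriv F z₀ = g z₀ := by
      rw [Filter.EventuallyEq.deriv_eq hfeq]
      exact hd.deriv
    have : deriv F z₀ = deriv f z₀ := by
      simp [hFdef, deriv_sub_const]
    rw [this, hd0] at hdF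
    exact hg0 hdF.symm
  have hn2 : 2 ≤ n := by omega
  have hnC : (n : ℂ) ≠ 0 := Nat.cast_ne_zero.mpr hn0
  -- n-th root of g near z₀
  set c : ℂ := g z₀ with hcdef
  set r : ℂ → ℂ := fun z => Complex.exp ((Complex.log (g z / c) + Complex.log c) / n) with hrdef
  have hr_an : AnalyticAt ℂ r z₀ := by
    apply AnalyticAt.cexp
    apply AnalyticAt.div _ analyticAt_const hnC
    apply AnalyticAt.add _ analyticAt_const
    apply AnalyticAt.clog (hg_an.div analyticAt_const hg0)
    simp [← hcdef, div_self hg0, Complex.mem_slitPlane_iff]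
  have hgne : ∀ᶠ z in nhds z₀, g z ≠ 0 := hg_an.continuousAt.eventually_ne hg0
  have hrpow : ∀ᶠ z in nhds z₀, r z ^ n = g z := by
    filter_upwards [hgne] with z hz
    rw [hrdef]
    simp only
    rw [← Complex.exp_nat_mul, mul_div_cancel₀ _ hnC, Complex.exp_add,
      Complex.exp_log (div_ne_zero hz hg0), Complex.exp_log hg0]
    field_simp
  set φ : ℂ → ℂ := fun z => (z - z₀) * r z with hφdef
  have hφ_an : AnalyticAt ℂ φ z₀ := (analyticAt_id.sub analyticAt_const).mul hr_an
  have hφ0 : φ z₀ = 0 := by simp [hφdef]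
  have hFφ : ∀ᶠ z in nhds z₀, F z = φ z ^ n := by
    filter_upwards [hfeq, hrpow] with z h1 h2
    rw [h1, hφdef]
    simp only [smul_eq_mul, mul_pow]
    rw [h2]
  -- open mapping
  have hmap : nhds (0 : ℂ) ≤ Filter.map φ (nhds z₀) := by
    rcases hφ_an.eventually_constant_or_nhds_le_map_nhds with hcon | hle
    · exfalso
      apply hne
      filter_upwards [hFφ, hcon] with z h1 h2
      rw [h1, h2, hφ0, zero_pow hn0]
    · rwa [hφ0] at hle
  have hN : s ∩ {z | F z = φ z ^ n} ∈ nhds z₀ := Filter.inter_mem hs hFφ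
  have himg : φ '' (s ∩ {z | F z = φ z ^ n}) ∈ nhds (0 : ℂ) :=
    hmap (Filter.image_mem_map hN)
  obtain ⟨ε, hε, hball⟩ := Metric.mem_nhds_iff.mp himg
  set ω : ℂ := Complex.exp (((2 * Real.pi / n : ℝ) : ℂ) * Complex.I) with hωdef
  have hωabs : ‖ω‖ = 1 := Complex.norm_exp_ofReal_mul_I _
  have hωn : ω ^ n = 1 := by
    rw [hωdef, ← Complex.exp_nat_mul]
    have : (n : ℂ) * (((2 * Real.pi / n : ℝ) : ℂ) * Complex.I) = 2 * Real.pi * Complex.I := by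
      push_cast
      field_simp
    rw [this, Complex.exp_two_pi_mul_I]
  have hω1 : ω ≠ 1 := by
    rw [hωdef, Ne, Complex.exp_eq_one_iff]
    rintro ⟨k, hk⟩
    have him := congrArg Complex.im hk
    simp [Complex.mul_I_im] at him
    have h1 : (2 * Real.pi / n : ℝ) = k * (2 * Real.pi) := by
      convert him using 2
    have hπ := Real.pi_pos
    have hnR : (0:ℝ) < (n:ℝ) := by positivity
    have hk1 : (k:ℝ) = 1 / n := by
      field_simp at h1 ⊢
      nlinarith
    have hk0' : (0:ℝ) < (k:ℝ) := by rw [hk1]; positivity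
    have hk1' : (k:ℝ) < 1 := by
      rw [hk1, div_lt_one hnR]
      exact_mod_cast (by omega : 1 < n)
    have : (0:ℤ) < k := by exact_mod_cast hk0'
    have : k < 1 := by exact_mod_cast hk1'
    omega
  -- pick two distinct preimages with equal f-values
  set w : ℂ := ((ε/2 : ℝ) : ℂ) with hwdef
  have hw0 : w ≠ 0 := by
    rw [hwdef]
    exact_mod_cast (by positivity : (ε/2 : ℝ) ≠ 0)
  have hwabs : ‖w‖ = ε/2 := by
    rw [hwdef, Complex.norm_real, Real.norm_eq_abs, abs_of_pos (by linarith)]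
  have hwmem : w ∈ Metric.ball (0:ℂ) ε := by
    rw [Metric.mem_ball, Complex.dist_eq, sub_zero, hwabs]; linarith
  have hwωmem : w * ω ∈ Metric.ball (0:ℂ) ε := by
    rw [Metric.mem_ball, Complex.dist_eq, sub_zero, norm_mul, hwabs, hωabs, mul_one]
    linarith
  obtain ⟨a, ⟨has, haF⟩, ha⟩ := hball hwmem
  obtain ⟨b, ⟨hbs, hbF⟩, hb⟩ := hball hwωmem
  have hfab : f a = f b := by
    have h1 : f a - f z₀ = w ^ n := by rw [← ha]; exact haF
    have h2 : f b - f z₀ = w ^ n := by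
      have : F b = (w * ω) ^ n := by rw [← hb]; exact hbF
      rw [mul_pow, hωn, mul_one] at this
      exact this
    have := h1.trans h2.symm
    linear_combination this
  have hab : a = b := hinj has hbs hfab
  rw [hab, hb] at ha
  exact hω1 (mul_left_cancel₀ hw0 (by rw [mul_one]; exact ha))


/-- If `h ∈ Σ(Π,θ₁,θ₂)`, then `F_ζ := h⁻¹(h(·)+ζ)` is a well-defined family of holomorphic
self-maps of the half-plane, holomorphic in `ζ ∈ Ω(θ₁,θ₂)`, satisfying the semigroup property
and tending to infinity along every ray. -/
theorem stmt9 (h : ℂ → ℂ) (θ₁ θ₂ : ℝ) (hθ₁ : 0 < θ₁) (hθ₂ : 0 < θ₂)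
    (hsum : θ₁ + θ₂ ≤ Real.pi)
    (hholo : DifferentiableOn ℂ h HP) (hinj : InjOn h HP) (hnorm : h 1 = 0)
    (hSigma : ∀ θ : ℝ, -θ₁ < θ → θ < θ₂ → ConvexInDir h θ) :
    ∃ F : ℂ → ℂ → ℂ,
      (∀ ζ ∈ Sector θ₁ θ₂, MapsTo (F ζ) HP HP ∧
        (∀ z ∈ HP, DifferentiableOn ℂ (F ζ) HP) ∧
        ∀ z ∈ HP, h (F ζ z) = h z + ζ) ∧
      (∀ z ∈ HP, DifferentiableOn ℂ (fun ζ => F ζ z) (Sector θ₁ θ₂)) ∧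
      (∀ ζ₁ ∈ Sector θ₁ θ₂, ∀ ζ₂ ∈ Sector θ₁ θ₂, ∀ z ∈ HP,
        F ζ₁ (F ζ₂ z) = F (ζ₁ + ζ₂) z) ∧
      (∀ θ : ℝ, -θ₁ < θ → θ < θ₂ → ∀ z ∈ HP,
        Tendsto (fun t : ℝ => ‖F (t * Complex.exp (θ * Complex.I)) z‖)
          atTop atTop) := by
  have hopen : IsOpen HP := isOpen_lt continuous_const Complex.continuous_re
  have hpre : IsPreconnected HP := (convex_halfSpace_re_gt 0).isPreconnected
  have han : AnalyticOnNhd ℂ h HP := hholo.analyticOnNhd hopen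
  have hderiv : ∀ z ∈ HP, deriv h z ≠ 0 := fun z hz =>
    inj_deriv_ne_zero (han z hz) (hopen.mem_nhds hz) hinj
  have hstrict : ∀ z ∈ HP, HasStrictDerivAt h (deriv h z) z := by
    intro z hz
    obtain ⟨p, hp⟩ := han z hz
    have h1 := hp.hasStrictDerivAt
    have h2 := h1.hasDerivAt.deriv
    rw [h2]; exact h1
  set g := Function.invFunOn h HP with hgdef
  have hgleft : ∀ z ∈ HP, g (h z) = z := fun z hz => hinj.leftInvOn_invFunOn hz
  have hgmem : ∀ v ∈ h '' HP, g v ∈ HP := by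
    rintro v ⟨u, hu, rfl⟩; exact Function.invFunOn_mem ⟨u, hu, rfl⟩
  have hgright : ∀ v ∈ h '' HP, h (g v) = v := by
    rintro v ⟨u, hu, rfl⟩; exact Function.invFunOn_eq ⟨u, hu, rfl⟩
  have hgdiff : ∀ v ∈ h '' HP, DifferentiableAt ℂ g v := by
    rintro v ⟨u, hu, rfl⟩
    have hstr := hstrict u hu
    have hd := hderiv u hu
    set hS := hstr.hasStrictFDerivAt_equiv hd with hSdef
    have hev1 : ∀ᶠ y in nhds (h u), h (hS.localInverse h _ u y) = y :=
      hS.eventually_right_inverse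
    have hev2 : ∀ᶠ y in nhds (h u), hS.localInverse h _ u y ∈ HP := by
      apply hS.localInverse_continuousAt.eventually_mem
      rw [hS.localInverse_apply_image]
      exact hopen.mem_nhds hu
    have heq : ∀ᶠ y in nhds (h u), g y = hS.localInverse h _ u y := by
      filter_upwards [hev1, hev2] with y h1 h2
      calc g y = g (h (hS.localInverse h _ u y)) := by rw [h1]
        _ = hS.localInverse h _ u y := hgleft _ h2
    exact (Filter.EventuallyEq.differentiableAt_iff heq).mpr hS.to_localInverse.differentiableAt
  have hsect : ∀ ζ ∈ Sector θ₁ θ₂, ∀ z ∈ HP, h z + ζ ∈ h '' HP := by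
    rintro ζ ⟨hζ0, hζ1, hζ2⟩ z hz
    have habs : 0 < ‖ζ‖ := norm_pos_iff.mpr hζ0
    have := (hSigma (Complex.arg ζ) hζ1 hζ2).1 z hz ‖ζ‖ habs
    rwa [Complex.norm_mul_exp_arg_mul_I] at this
  refine ⟨fun ζ z => g (h z + ζ), fun ζ hζ => ⟨?_, ?_, ?_⟩, ?_, ?_, ?_⟩
  · exact fun z hz => hgmem _ (hsect ζ hζ z hz)
  · intro _ _ x hx
    exact ((hgdiff _ (hsect ζ hζ x hx)).comp x
      ((hholo.differentiableAt (hopen.mem_nhds hx)).add_const ζ)).differentiableWithinAt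
  · exact fun z hz => hgright _ (hsect ζ hζ z hz)
  · intro z hz ζ hζ
    exact ((hgdiff _ (hsect ζ hζ z hz)).comp ζ
      (differentiableAt_id.const_add (h z))).differentiableWithinAt
  · intro ζ₁ hζ₁ ζ₂ hζ₂ z hz
    have h2 : h (g (h z + ζ₂)) = h z + ζ₂ := hgright _ (hsect ζ₂ hζ₂ z hz)
    show g (h (g (h z + ζ₂)) + ζ₁) = g (h z + (ζ₁ + ζ₂))
    rw [h2]; congr 1; ring
  · intro θ hθ1 hθ2 z hz
    have hθIoc : θ ∈ Ioc (-Real.pi) Real.pi :=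
      ⟨by nlinarith, by nlinarith⟩
    have hθsec : ∀ t : ℝ, 0 < t → ((t : ℂ) * Complex.exp ((θ : ℂ) * Complex.I)) ∈ Sector θ₁ θ₂ := by
      intro t ht
      have hne0 : ((t : ℂ) * Complex.exp ((θ : ℂ) * Complex.I)) ≠ 0 :=
        mul_ne_zero (by exact_mod_cast ht.ne') (Complex.exp_ne_zero _)
      have harg : Complex.arg ((t : ℂ) * Complex.exp ((θ : ℂ) * Complex.I)) = θ := by
        rw [Complex.arg_real_mul _ ht, Complex.arg_exp_mul_I,
          toIocMod_eq_self (mul_pos two_pos Real.pi_pos)]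
        simpa [two_mul] using hθIoc
      exact ⟨hne0, by rw [harg]; exact hθ1, by rw [harg]; exact hθ2⟩
    apply (hSigma θ hθ1 hθ2).2 z hz
    intro t ht
    refine ⟨hgmem _ (hsect _ (hθsec t ht) z hz), hgright _ (hsect _ (hθsec t ht) z hz)⟩
end
end

section
/- Let γ₁, γ₂ : [0,∞) → (0, π/2) be continuous functions and f : Π → ℂ a semigroup generator satisfying −γ₁(Re z) ≤ arg f(z) ≤ γ₂(Re z) for all z ∈ Π, generating the semigroup {F_t}_{t≥0}. Then for each z ∈ Π and each t ≥ 0, the point F_t(z) lies in the set {u + iv : u ≥ Re z, B₁(u) ≤ v ≤ B₂(u)}, where B₁(u) = Im z − ∫_{Re z}^{u} tan γ₁(s) ds and B₂(u) = Im z + ∫_{Re z}^{u} tan γ₂(s) ds. -/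
open Filter Set MeasureTheory

noncomputable section

open Complex ComplexConjugate Topology

lemma sq_key (a b : ℂ) :
    norm (a + conj b) ^ 2 = norm (a - b) ^ 2 + 4 * a.re * b.re := by
  rw [← normSq_eq_norm_sq, ← normSq_eq_norm_sq]
  simp [normSq_apply]
  ring

lemma abs_add_conj_pos {a b : ℂ} (ha : a ∈ HP) (hb : b ∈ HP) :
    0 < norm (a + conj b) := by
  have : (0:ℝ) < (a + conj b).re := by
    simp only [add_re, conj_re]; exact add_pos ha hb
  calc (0:ℝ) < (a + conj b).re := this
    _ ≤ norm (a + conj b) := Complex.re_le_norm _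

lemma abs_sub_lt_abs_add_conj {a b : ℂ} (ha : a ∈ HP) (hb : b ∈ HP) :
    norm (a - b) < norm (a + conj b) := by
  have h := sq_key a b
  have h4 : 0 < 4 * a.re * b.re := by
    have := ha.out; have := hb.out; positivity
  nlinarith [norm_nonneg (a - b), norm_nonneg (a + conj b)]

/-- Cayley-type transform sending `HP` to the unit disk, `c ↦ 0`. -/
def Tm (c w : ℂ) : ℂ := (w - c) / (w + conj c)

/-- Inverse transform sending the unit disk to `HP`, `0 ↦ a`. -/
def Sm (a ζ : ℂ) : ℂ := (a + conj a * ζ) / (1 - ζ)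

lemma Tm_abs_lt_one {c w : ℂ} (hc : c ∈ HP) (hw : w ∈ HP) :
    norm (Tm c w) < 1 := by
  unfold Tm
  rw [norm_div, div_lt_one (abs_add_conj_pos hw hc)]
  exact abs_sub_lt_abs_add_conj hw hc

lemma Tm_mem_ball {c w : ℂ} (hc : c ∈ HP) (hw : w ∈ HP) :
    Tm c w ∈ Metric.ball (0:ℂ) 1 := by
  rw [Metric.mem_ball, dist_zero_right]
  exact Tm_abs_lt_one hc hw

lemma Sm_mem_HP {a : ℂ} (ha : a ∈ HP) {ζ : ℂ} (hζ : ζ ∈ Metric.ball (0:ℂ) 1) :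
    Sm a ζ ∈ HP := by
  rw [Metric.mem_ball, dist_zero_right] at hζ
  have hζ1 : ζ ≠ 1 := by
    intro h; rw [h] at hζ; simp at hζ
  have hy : (1:ℂ) - ζ ≠ 0 := sub_ne_zero.2 (Ne.symm hζ1)
  have hns : 0 < normSq (1 - ζ) := normSq_pos.2 hy
  have hζsq : normSq ζ < 1 := by
    rw [← Complex.sq_norm] at *
    nlinarith [norm_nonneg ζ]
  show 0 < (Sm a ζ).re
  unfold Sm
  rw [Complex.div_re]
  have key : (a + conj a * ζ).re * (1 - ζ).re / normSq (1 - ζ)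
      + (a + conj a * ζ).im * (1 - ζ).im / normSq (1 - ζ)
      = a.re * (1 - normSq ζ) / normSq (1 - ζ) := by
    rw [← add_div]
    congr 1
    simp [normSq_apply]
    ring
  rw [key]
  have := ha.out
  have h1 : 0 < 1 - normSq ζ := by linarith
  positivity

lemma Sm_Tm {a b : ℂ} (ha : a ∈ HP) (hb : b ∈ HP) : Sm a (Tm a b) = b := by
  have hba : b + conj a ≠ 0 := by
    intro h
    have := abs_add_conj_pos hb ha
    rw [h] at this; simp at this
  have haa : a + conj a ≠ 0 := by
    intro h
    have : (a + conj a).re = 0 := by rw [h]; simp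
    simp only [add_re, conj_re] at this
    have := ha.out; linarith
  have h1 : (1:ℂ) - Tm a b = (a + conj a) / (b + conj a) := by
    unfold Tm; field_simp; ring
  unfold Sm
  rw [h1]
  unfold Tm
  field_simp
  ring

lemma Tm_self (c : ℂ) : Tm c c = 0 := by unfold Tm; simp

lemma Sm_zero (a : ℂ) : Sm a 0 = a := by unfold Sm; simp

/-- Schwarz–Pick inequality for holomorphic self-maps of the right half-plane. -/
lemma schwarz_pick_s12 {φ : ℂ → ℂ} (hd : DifferentiableOn ℂ φ HP) (hm : MapsTo φ HP HP)
    {a b : ℂ} (ha : a ∈ HP) (hb : b ∈ HP) :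
    norm (φ b - φ a) / norm (φ b + conj (φ a))
      ≤ norm (b - a) / norm (b + conj a) := by
  have hφa : φ a ∈ HP := hm ha
  have hHPopen : IsOpen HP := by
    have : HP = Complex.re ⁻¹' Ioi 0 := rfl
    rw [this]; exact isOpen_Ioi.preimage Complex.continuous_re
  set ψ : ℂ → ℂ := fun ζ => Tm (φ a) (φ (Sm a ζ)) with hψ
  have hSmaps : MapsTo (Sm a) (Metric.ball (0:ℂ) 1) HP := fun ζ hζ => Sm_mem_HP ha hζ
  have hSdiff : DifferentiableOn ℂ (Sm a) (Metric.ball (0:ℂ) 1) := by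
    apply DifferentiableOn.div
    · exact (differentiable_const _).differentiableOn.add
        ((differentiable_const _).mul differentiable_id).differentiableOn
    · exact (differentiable_const _).differentiableOn.sub differentiable_id.differentiableOn
    · intro ζ hζ
      rw [Metric.mem_ball, dist_zero_right] at hζ
      intro h
      have : ζ = 1 := by
        have := sub_eq_zero.1 h; exact this.symm
      rw [this] at hζ; simp at hζ
  have hTdiff : DifferentiableOn ℂ (Tm (φ a)) HP := by
    apply DifferentiableOn.div
    · exact differentiable_id.differentiableOn.sub (differentiable_const _).differentiableOn
    · exact differentiable_id.differentiableOn.add (differentiable_const _).differentiableOn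
    · intro w hw
      intro h
      have := abs_add_conj_pos hw hφa
      rw [h] at this; simp at this
  have hψdiff : DifferentiableOn ℂ ψ (Metric.ball (0:ℂ) 1) :=
    (hTdiff.comp (hd.comp hSdiff hSmaps) (fun ζ hζ => hm (hSmaps hζ)))
  have hψmaps : MapsTo ψ (Metric.ball (0:ℂ) 1) (Metric.ball (0:ℂ) 1) :=
    fun ζ hζ => Tm_mem_ball hφa (hm (hSmaps hζ))
  have hψ0 : ψ 0 = 0 := by
    simp only [hψ, Sm_zero, Tm_self]
  have hz : norm (Tm a b) < 1 := Tm_abs_lt_one ha hb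
  have key := Complex.norm_le_norm_of_mapsTo_ball hψdiff (hψmaps.mono_right Metric.ball_subset_closedBall) hψ0 hz
  have : ψ (Tm a b) = Tm (φ a) (φ b) := by rw [hψ]; simp only [Sm_Tm ha hb]
  rw [this] at key
  unfold Tm at key
  rwa [norm_div, norm_div] at key

variable {f : ℂ → ℂ} {F : ℝ → ℂ → ℂ}

lemma F_zero (hgen : Generates f F) {z : ℂ} (hz : z ∈ HP) : F 0 z = z := by
  have h0 : F 0 z ∈ HP := hgen.1.maps 0 le_rfl hz
  have h1 : Tendsto (fun h : ℝ => F h (F 0 z)) (𝓝[>] 0) (𝓝 (F 0 z)) := hgen.1.cont _ h0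
  have h2 : Tendsto (fun h : ℝ => F h z) (𝓝[>] 0) (𝓝 z) := hgen.1.cont z hz
  have heq : ∀ h ∈ Ioi (0:ℝ), F h (F 0 z) = F h z := fun h hh => by
    rw [hgen.1.comp h 0 (le_of_lt hh) le_rfl z hz, add_zero]
  have h1' : Tendsto (fun h : ℝ => F h z) (𝓝[>] 0) (𝓝 (F 0 z)) :=
    h1.congr' (eventually_nhdsWithin_of_forall heq)
  exact tendsto_nhds_unique h1' h2

lemma traj_hasDerivWithinAt (hgen : Generates f F) {z : ℂ} (hz : z ∈ HP) {t : ℝ} (ht : 0 ≤ t) :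
    HasDerivWithinAt (fun s => F s z) (f (F t z)) (Ici t) t := by
  have hw : F t z ∈ HP := hgen.1.maps t ht hz
  have hgen2 := hgen.2 (F t z) hw
  have h1 : Tendsto (fun s : ℝ => s - t) (𝓝[Ioi t] t) (𝓝[Ioi 0] 0) := by
    apply tendsto_nhdsWithin_of_tendsto_nhds_of_eventually_within
    · have h : Tendsto (fun s : ℝ => s - t) (𝓝 t) (𝓝 (t - t)) :=
        (continuous_id.sub continuous_const).tendsto t
      rw [sub_self] at h
      exact h.mono_left nhdsWithin_le_nhds
    · exact eventually_nhdsWithin_of_forall (fun s hs => mem_Ioi.2 (sub_pos.2 hs))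
  have h2 := hgen2.comp h1
  rw [hasDerivWithinAt_iff_tendsto_slope, Ici_sdiff_left]
  apply h2.congr'
  apply eventually_nhdsWithin_of_forall
  intro s hs
  have hst : (0:ℝ) ≤ s - t := le_of_lt (sub_pos.2 hs)
  show (F (s - t) (F t z) - F t z) / ((s - t : ℝ) : ℂ) = slope (fun s => F s z) t s
  rw [hgen.1.comp (s - t) t hst ht z hz, sub_add_cancel]
  rw [slope_def_module]
  rw [Complex.real_smul, Complex.ofReal_inv, inv_mul_eq_div]

lemma abs_add_conj_comm (a b : ℂ) :
    norm (a + conj b) = norm (b + conj a) := by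
  rw [← Complex.norm_conj (a + conj b), map_add]
  simp [add_comm]

lemma rho_small {p q : ℂ} {r : ℝ} (hr : 0 ≤ r) (hr2 : r ≤ 1/2)
    (h : norm (p - q) ≤ r * norm (p + conj q)) :
    norm (p - q) ≤ 4 * r * norm p := by
  have h1 : norm (p + conj q) ≤ norm p + norm q := by
    calc norm (p + conj q) ≤ norm p + norm (conj q) :=
          norm_add_le _ _
      _ = norm p + norm q := by rw [Complex.norm_conj]
  have h2 : norm q ≤ norm (p - q) + norm p := by
    have h3 := norm_add_le (q - p) p
    rw [sub_add_cancel] at h3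
    rw [norm_sub_rev p q]
    linarith [h3]
  nlinarith [norm_nonneg (p - q), norm_nonneg p]

lemma traj_rho (hgen : Generates f F) {z : ℂ} (hz : z ∈ HP) {s h r : ℝ}
    (hs : 0 ≤ s) (hh : 0 ≤ h) (hr : 0 ≤ r)
    (hδ : norm (F h z - z) ≤ r * z.re) :
    norm (F (s + h) z - F s z)
      ≤ r * norm (F (s + h) z + conj (F s z)) := by
  have hw : F h z ∈ HP := hgen.1.maps h hh hz
  have hsp := schwarz_pick_s12 (hgen.1.holo s hs) (hgen.1.maps s hs) hz hw
  rw [hgen.1.comp s h hs hh z hz] at hsp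
  have hden : (0:ℝ) < norm (F h z + conj z) := abs_add_conj_pos hw hz
  have hre : z.re ≤ norm (F h z + conj z) := by
    have h1 : z.re ≤ (F h z + conj z).re := by
      simp only [add_re, conj_re]
      have := (hw).out
      linarith
    exact h1.trans (Complex.re_le_norm _)
  have hrhs : norm (F h z - z) / norm (F h z + conj z) ≤ r := by
    rw [div_le_iff₀ hden]
    calc norm (F h z - z) ≤ r * z.re := hδ
      _ ≤ r * norm (F h z + conj z) := by
          apply mul_le_mul_of_nonneg_left hre hr
  have hd2 : (0:ℝ) < norm (F (s + h) z + conj (F s z)) :=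
    abs_add_conj_pos (hgen.1.maps (s + h) (by linarith) hz) (hgen.1.maps s hs hz)
  have := hsp.trans hrhs
  rwa [div_le_iff₀ hd2] at this

lemma traj_continuousOn (hgen : Generates f F) {z : ℂ} (hz : z ∈ HP) :
    ContinuousOn (fun t => F t z) (Ici (0:ℝ)) := by
  intro t₀ ht₀
  have ht₀' : (0:ℝ) ≤ t₀ := ht₀
  set p := F t₀ z with hpdef
  have hp : p ∈ HP := hgen.1.maps t₀ ht₀' hz
  rw [Metric.continuousWithinAt_iff]
  intro ε hε
  set r := min (1/2) (ε / (4 * (norm p + 1))) with hrdef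
  have habsp : (0:ℝ) ≤ norm p := norm_nonneg p
  have hrpos : 0 < r := lt_min (by norm_num) (by positivity)
  have hr2 : r ≤ 1/2 := min_le_left _ _
  have hzre : 0 < z.re := hz.out
  have hcz := hgen.1.cont z hz
  rw [Metric.tendsto_nhdsWithin_nhds] at hcz
  obtain ⟨δ, hδpos, hδ⟩ := hcz (r * z.re) (by positivity)
  refine ⟨δ, hδpos, ?_⟩
  intro t ht hdist
  rcases eq_or_ne t t₀ with rfl | hne
  · simpa using hε
  have ht' : (0:ℝ) ≤ t := ht
  -- the increment
  set s := min t t₀ with hsdef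
  set h := max t t₀ - s with hhdef
  have hs0 : 0 ≤ s := le_min ht' ht₀'
  have hh0 : 0 ≤ h := by
    have := min_le_max (a := t) (b := t₀)
    simp only [hhdef]; linarith
  have hhδ : norm (F h z - z) ≤ r * z.re := by
    rcases lt_or_gt_of_ne hne with hlt | hgt
    · have : h = t₀ - t := by simp [hhdef, hsdef, min_eq_left hlt.le, max_eq_right hlt.le]
      have hd : dist h 0 < δ := by
        rw [this, Real.dist_eq, sub_zero, _root_.abs_of_nonneg (by linarith)]
        rw [Real.dist_eq] at hdist
        rw [_root_.abs_of_nonpos (by linarith)] at hdist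
        linarith
      exact le_of_lt (by rw [← Complex.dist_eq]; exact hδ (by rw [this]; exact sub_pos.2 hlt) hd)
    · have : h = t - t₀ := by simp [hhdef, hsdef, min_eq_right hgt.le, max_eq_left hgt.le]
      have hd : dist h 0 < δ := by
        rw [this, Real.dist_eq, sub_zero, _root_.abs_of_nonneg (by linarith)]
        rw [Real.dist_eq] at hdist
        rw [_root_.abs_of_nonneg (by linarith)] at hdist
        linarith
      exact le_of_lt (by rw [← Complex.dist_eq]; exact hδ (by rw [this]; exact sub_pos.2 hgt) hd)
  have hkey := traj_rho hgen hz hs0 hh0 hrpos.le hhδ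
  have hsh : s + h = max t t₀ := by simp [hhdef]
  rw [hsh] at hkey
  -- convert to a bound on `abs (p - F t z)`
  have key2 : norm (p - F t z) ≤ r * norm (p + conj (F t z)) := by
    rcases lt_or_gt_of_ne hne with hlt | hgt
    · have h1 : max t t₀ = t₀ := max_eq_right hlt.le
      have h2 : s = t := min_eq_left hlt.le
      rw [h1, h2] at hkey
      exact hkey
    · have h1 : max t t₀ = t := max_eq_left hgt.le
      have h2 : s = t₀ := min_eq_right hgt.le
      rw [h1, h2] at hkey
      rw [norm_sub_rev, abs_add_conj_comm]
      exact hkey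
  have hfinal := rho_small hrpos.le hr2 key2
  have hrbound : r ≤ ε / (4 * (norm p + 1)) := min_le_right _ _
  have : 4 * r * norm p < ε := by
    have h4 : 4 * r * norm p ≤ 4 * (ε / (4 * (norm p + 1))) * norm p := by
      apply mul_le_mul_of_nonneg_right _ habsp
      linarith
    have h5 : 4 * (ε / (4 * (norm p + 1))) * norm p < ε := by
      have hX : (0:ℝ) < 4 * (norm p + 1) := by positivity
      rw [show (4:ℝ) * (ε / (4 * (norm p + 1))) * norm p
          = ε * (4 * norm p) / (4 * (norm p + 1)) by ring]
      rw [div_lt_iff₀ hX]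
      nlinarith
    linarith
  have : norm (p - F t z) < ε := lt_of_le_of_lt hfinal this
  rwa [dist_eq, norm_sub_rev]

lemma comp_bounds {w : ℂ} {γl γu : ℝ} (hγl : 0 < γl) (hγl2 : γl < Real.pi / 2)
    (hγu : 0 < γu) (hγu2 : γu < Real.pi / 2)
    (h1 : -γl ≤ Complex.arg w) (h2 : Complex.arg w ≤ γu) :
    0 ≤ w.re ∧ -(Real.tan γl) * w.re ≤ w.im ∧ w.im ≤ Real.tan γu * w.re := by
  rcases eq_or_ne w 0 with rfl | hw
  · refine ⟨le_rfl, ?_, ?_⟩ <;> simp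
  have habs : |Complex.arg w| < Real.pi / 2 := by
    rw [abs_lt]
    constructor <;> [linarith; linarith]
  have hre : 0 < w.re := by
    rcases Complex.abs_arg_lt_pi_div_two_iff.1 habs with h | h
    · exact h
    · exact absurd h hw
  have htan : Real.tan (Complex.arg w) = w.im / w.re := Complex.tan_arg w
  have hmem : Complex.arg w ∈ Ioo (-(Real.pi/2)) (Real.pi/2) := by
    rw [abs_lt] at habs; exact ⟨habs.1, habs.2⟩
  have hmemu : γu ∈ Ioo (-(Real.pi/2)) (Real.pi/2) := ⟨by linarith, hγu2⟩
  have hmeml : -γl ∈ Ioo (-(Real.pi/2)) (Real.pi/2) := ⟨by linarith, by linarith⟩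
  have hup : w.im / w.re ≤ Real.tan γu := by
    rw [← htan]
    exact Real.strictMonoOn_tan.monotoneOn hmem hmemu h2
  have hlo : -(Real.tan γl) ≤ w.im / w.re := by
    rw [← Real.tan_neg, ← htan]
    exact Real.strictMonoOn_tan.monotoneOn hmeml hmem h1
  refine ⟨hre.le, ?_, ?_⟩
  · rw [← le_div_iff₀ hre] at *
    linarith [hlo]
  · rw [div_le_iff₀ hre] at hup
    linarith [hup]

lemma tan_primitive_hasDerivAt {γ : ℝ → ℝ} (hcγ : Continuous γ)
    (hγ : ∀ s : ℝ, 0 ≤ s → 0 < γ s ∧ γ s < Real.pi / 2)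
    {a y : ℝ} (ha : 0 < a) (hy : 0 < y) :
    HasDerivAt (fun r => ∫ s in a..r, Real.tan (γ s)) (Real.tan (γ y)) y := by
  have hcont : ∀ x : ℝ, 0 < x → ContinuousAt (fun s => Real.tan (γ s)) x := by
    intro x hx
    have h := hγ x hx.le
    have hcos : Real.cos (γ x) ≠ 0 := by
      have := Real.cos_pos_of_mem_Ioo (show γ x ∈ Ioo (-(Real.pi/2)) (Real.pi/2) from
        ⟨by linarith [h.1, Real.pi_pos], h.2⟩)
      exact this.ne'
    exact (Real.continuousAt_tan.2 hcos).comp (hcγ.continuousAt)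
  have hconOn : ContinuousOn (fun s => Real.tan (γ s)) (Ioi 0) :=
    fun x hx => (hcont x hx).continuousWithinAt
  apply intervalIntegral.integral_hasDerivAt_right
  · apply ContinuousOn.intervalIntegrable
    apply hconOn.mono
    intro x hx
    rcases mem_uIcc.1 hx with ⟨h1, _⟩ | ⟨h1, _⟩
    · exact lt_of_lt_of_le ha h1
    · exact lt_of_lt_of_le hy h1
  · exact hconOn.stronglyMeasurableAtFilter isOpen_Ioi _ hy
  · exact hcont y hy


/-- Localization of semigroup trajectories: if `−γ₁(Re z) ≤ arg f(z) ≤ γ₂(Re z)`, then each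
trajectory stays in the region bounded by the curves `B₁` and `B₂`. -/
theorem stmt12 (γ₁ γ₂ : ℝ → ℝ) (hc₁ : Continuous γ₁) (hc₂ : Continuous γ₂)
    (hγ : ∀ s : ℝ, 0 ≤ s →
      0 < γ₁ s ∧ γ₁ s < Real.pi / 2 ∧ 0 < γ₂ s ∧ γ₂ s < Real.pi / 2)
    (f : ℂ → ℂ) (F : ℝ → ℂ → ℂ) (hgen : Generates f F)
    (harg : ∀ z ∈ HP, -γ₁ z.re ≤ Complex.arg (f z) ∧ Complex.arg (f z) ≤ γ₂ z.re) :
    ∀ z ∈ HP, ∀ t : ℝ, 0 ≤ t →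
      z.re ≤ (F t z).re ∧
      z.im - ∫ s in z.re..(F t z).re, Real.tan (γ₁ s) ≤ (F t z).im ∧
      (F t z).im ≤ z.im + ∫ s in z.re..(F t z).re, Real.tan (γ₂ s) := by
  intro z hz t ht
  have hzre : 0 < z.re := hz.out
  have hg0 : F 0 z = z := F_zero hgen hz
  have hmem : ∀ x : ℝ, 0 ≤ x → F x z ∈ HP := fun x hx => hgen.1.maps x hx hz
  have hgc : ContinuousOn (fun s : ℝ => F s z) (Icc 0 t) :=
    (traj_continuousOn hgen hz).mono Icc_subset_Ici_self
  have hgd : ∀ x ∈ Ico (0:ℝ) t, HasDerivWithinAt (fun s : ℝ => F s z) (f (F x z)) (Ici x) x :=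
    fun x hx => traj_hasDerivWithinAt hgen hz hx.1
  have huc : ContinuousOn (fun x : ℝ => (F x z).re) (Icc 0 t) :=
    Complex.continuous_re.comp_continuousOn hgc
  have hvc : ContinuousOn (fun x : ℝ => (F x z).im) (Icc 0 t) :=
    Complex.continuous_im.comp_continuousOn hgc
  have hud : ∀ x ∈ Ico (0:ℝ) t,
      HasDerivWithinAt (fun x : ℝ => (F x z).re) ((f (F x z)).re) (Ici x) x :=
    fun x hx => (Complex.reCLM.hasFDerivAt).comp_hasDerivWithinAt x (hgd x hx)
  have hvd : ∀ x ∈ Ico (0:ℝ) t,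
      HasDerivWithinAt (fun x : ℝ => (F x z).im) ((f (F x z)).im) (Ici x) x :=
    fun x hx => (Complex.imCLM.hasFDerivAt).comp_hasDerivWithinAt x (hgd x hx)
  have hsign : ∀ x ∈ Ico (0:ℝ) t, 0 ≤ (f (F x z)).re ∧
      -(Real.tan (γ₁ ((F x z).re))) * (f (F x z)).re ≤ (f (F x z)).im ∧
      (f (F x z)).im ≤ Real.tan (γ₂ ((F x z).re)) * (f (F x z)).re := by
    intro x hx
    have hgx := hmem x hx.1
    have h := harg (F x z) hgx
    have hγx := hγ ((F x z).re) (le_of_lt hgx.out)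
    exact comp_bounds hγx.1 hγx.2.1 hγx.2.2.1 hγx.2.2.2 h.1 h.2
  have htmem : t ∈ Icc (0:ℝ) t := ⟨ht, le_rfl⟩
  -- (1) the real part is increasing
  have hine1 : z.re ≤ (F t z).re := by
    have := image_le_of_deriv_right_le_deriv_boundary
      (f := fun _ : ℝ => z.re) (f' := fun _ => 0) (a := 0) (b := t)
      continuousOn_const (fun x _ => hasDerivWithinAt_const x _ z.re)
      (by rw [hg0]) huc hud (fun x hx => (hsign x hx).1)
    exact this htmem
  -- derivative facts for the primitives
  have hγ₁' : ∀ s : ℝ, 0 ≤ s → 0 < γ₁ s ∧ γ₁ s < Real.pi / 2 :=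
    fun s hs => ⟨(hγ s hs).1, (hγ s hs).2.1⟩
  have hγ₂' : ∀ s : ℝ, 0 ≤ s → 0 < γ₂ s ∧ γ₂ s < Real.pi / 2 :=
    fun s hs => ⟨(hγ s hs).2.2.1, (hγ s hs).2.2.2⟩
  have hG₁d : ∀ y : ℝ, 0 < y →
      HasDerivAt (fun r : ℝ => ∫ s in z.re..r, Real.tan (γ₁ s)) (Real.tan (γ₁ y)) y :=
    fun y hy => tan_primitive_hasDerivAt hc₁ hγ₁' hzre hy
  have hG₂d : ∀ y : ℝ, 0 < y →
      HasDerivAt (fun r : ℝ => ∫ s in z.re..r, Real.tan (γ₂ s)) (Real.tan (γ₂ y)) y :=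
    fun y hy => tan_primitive_hasDerivAt hc₂ hγ₂' hzre hy
  have hux : ∀ x ∈ Icc (0:ℝ) t, 0 < (F x z).re := fun x hx => (hmem x hx.1).out
  -- continuity of the composite primitives
  have hP₁c : ContinuousOn (fun x : ℝ => ∫ s in z.re..(F x z).re, Real.tan (γ₁ s)) (Icc 0 t) :=
    fun x hx => by
      have h1 : ContinuousAt (fun r : ℝ => ∫ s in z.re..r, Real.tan (γ₁ s)) ((F x z).re) :=
        (hG₁d _ (hux x hx)).continuousAt
      exact ContinuousAt.comp_continuousWithinAt (x := x) h1 (huc x hx)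
  have hP₂c : ContinuousOn (fun x : ℝ => ∫ s in z.re..(F x z).re, Real.tan (γ₂ s)) (Icc 0 t) :=
    fun x hx => by
      have h1 : ContinuousAt (fun r : ℝ => ∫ s in z.re..r, Real.tan (γ₂ s)) ((F x z).re) :=
        (hG₂d _ (hux x hx)).continuousAt
      exact ContinuousAt.comp_continuousWithinAt (x := x) h1 (huc x hx)
  -- right derivatives of the composite primitives
  have hP₁d : ∀ x ∈ Ico (0:ℝ) t,
      HasDerivWithinAt (fun x : ℝ => ∫ s in z.re..(F x z).re, Real.tan (γ₁ s))
        (Real.tan (γ₁ ((F x z).re)) * (f (F x z)).re) (Ici x) x :=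
    fun x hx => by have := (hG₁d _ (hux x (Ico_subset_Icc_self hx))).comp_hasDerivWithinAt x (hud x hx); exact this
  have hP₂d : ∀ x ∈ Ico (0:ℝ) t,
      HasDerivWithinAt (fun x : ℝ => ∫ s in z.re..(F x z).re, Real.tan (γ₂ s))
        (Real.tan (γ₂ ((F x z).re)) * (f (F x z)).re) (Ici x) x :=
    fun x hx => by have := (hG₂d _ (hux x (Ico_subset_Icc_self hx))).comp_hasDerivWithinAt x (hud x hx); exact this
  -- (3) upper bound
  have hine3 : (F t z).im ≤ z.im + ∫ s in z.re..(F t z).re, Real.tan (γ₂ s) := by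
    have := image_le_of_deriv_right_le_deriv_boundary
      (f := fun x : ℝ => (F x z).im - ∫ s in z.re..(F x z).re, Real.tan (γ₂ s))
      (f' := fun x : ℝ => (f (F x z)).im - Real.tan (γ₂ ((F x z).re)) * (f (F x z)).re)
      (a := 0) (b := t) (B := fun _ : ℝ => z.im) (B' := fun _ => 0)
      (hvc.sub hP₂c)
      (fun x hx => (hvd x hx).sub (hP₂d x hx))
      (by beta_reduce; rw [hg0, intervalIntegral.integral_same]; simp)
      continuousOn_const (fun x _ => hasDerivWithinAt_const x _ z.im)
      (fun x hx => by beta_reduce; have := (hsign x hx).2.2; linarith)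
    have h := this htmem
    linarith [h]
  -- (2) lower bound
  have hine2 : z.im - (∫ s in z.re..(F t z).re, Real.tan (γ₁ s)) ≤ (F t z).im := by
    have := image_le_of_deriv_right_le_deriv_boundary
      (f := fun x : ℝ => z.im - ∫ s in z.re..(F x z).re, Real.tan (γ₁ s))
      (f' := fun x : ℝ => 0 - Real.tan (γ₁ ((F x z).re)) * (f (F x z)).re)
      (a := 0) (b := t) (B := fun x : ℝ => (F x z).im) (B' := fun x => (f (F x z)).im)
      (continuousOn_const.sub hP₁c)
      (fun x hx => (hasDerivWithinAt_const x _ z.im).sub (hP₁d x hx))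
      (by beta_reduce; rw [hg0, intervalIntegral.integral_same]; simp)
      hvc hvd
      (fun x hx => by
        have := (hsign x hx).2.1
        beta_reduce
        linarith [this])
    exact this htmem
  exact ⟨hine1, hine2, hine3⟩
end
end

section
/- Let 0 ≤ a < b and f(z) = (z+a)/(z+b) on Π. Then |arg f(z)| ≤ arctan( (b−a) / (2√((Re z + a)(Re z + b))) ) for all z ∈ Π. -/
open Filter Set MeasureTheory

noncomputable section

/-- For `f(z) = (z+a)/(z+b)` with `0 ≤ a < b`, the argument of `f` on the half-plane is
bounded by `arctan((b−a)/(2√((Re z + a)(Re z + b))))`. -/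
theorem stmt14 (a b : ℝ) (ha : 0 ≤ a) (hab : a < b) :
    ∀ z ∈ HP,
      |Complex.arg ((z + (a : ℂ)) / (z + (b : ℂ)))| ≤
        Real.arctan ((b - a) / (2 * Real.sqrt ((z.re + a) * (z.re + b)))) := by
  intro z hz
  have hx : 0 < z.re := hz
  set x := z.re with hxdef
  set y := z.im with hydef
  set w : ℂ := (z + (a : ℂ)) / (z + (b : ℂ)) with hw
  have hP : 0 < (x + a) * (x + b) := by nlinarith
  have hn : 0 < Complex.normSq (z + (b : ℂ)) := by
    rw [Complex.normSq_pos]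
    intro h
    have : (z + (b : ℂ)).re = 0 := by rw [h]; simp
    simp only [Complex.add_re, Complex.ofReal_re] at this
    nlinarith
  have hD : 0 < (x + a) * (x + b) + y * y := by nlinarith [hP]
  have hre : w.re = ((x + a) * (x + b) + y * y) / Complex.normSq (z + (b : ℂ)) := by
    rw [hw, Complex.div_re]
    simp only [Complex.add_re, Complex.add_im, Complex.ofReal_re, Complex.ofReal_im, add_zero]
    rw [← add_div]
  have him : w.im = (y * (b - a)) / Complex.normSq (z + (b : ℂ)) := by
    rw [hw, Complex.div_im]
    simp only [Complex.add_re, Complex.add_im, Complex.ofReal_re, Complex.ofReal_im, add_zero]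
    rw [div_sub_div_same]
    rw [hydef]
    ring_nf
  have hwre : 0 < w.re := by rw [hre]; positivity
  have hratio : w.im / w.re = (y * (b - a)) / ((x + a) * (x + b) + y * y) := by
    rw [him, hre]
    rw [div_div_div_cancel_right₀]
    exact hn.ne'
  have harg : Complex.arg w = Real.arctan (w.im / w.re) := by
    rw [← Complex.tan_arg, Real.arctan_tan]
    · exact Complex.neg_pi_div_two_lt_arg_iff.2 (Or.inl hwre)
    · exact Complex.arg_lt_pi_div_two_iff.2 (Or.inl hwre)
  rw [harg, hratio]
  have hnn : ∀ t : ℝ, 0 ≤ t → 0 ≤ Real.arctan t := fun t ht => by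
    simpa using Real.arctan_strictMono.monotone ht
  have habs : |Real.arctan ((y * (b - a)) / ((x + a) * (x + b) + y * y))| =
      Real.arctan (|(y * (b - a)) / ((x + a) * (x + b) + y * y)|) := by
    rcases abs_cases ((y * (b - a)) / ((x + a) * (x + b) + y * y)) with ⟨h1, h2⟩ | ⟨h1, h2⟩
    · rw [h1, abs_of_nonneg (hnn _ h2)]
    · rw [h1, Real.arctan_neg, abs_of_nonpos]
      have := hnn _ (by linarith : (0:ℝ) ≤ -(y * (b - a) / ((x + a) * (x + b) + y * y)))
      rw [Real.arctan_neg] at this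
      linarith
  rw [habs]
  apply Real.arctan_strictMono.monotone
  rw [abs_div, abs_of_pos hD, abs_mul, abs_of_nonneg (by linarith : (0:ℝ) ≤ b - a)]
  rw [div_le_div_iff₀ hD (by positivity)]
  have hs := Real.sq_sqrt hP.le
  nlinarith [sq_nonneg (Real.sqrt ((x + a) * (x + b)) - |y|), sq_abs y,
    Real.sqrt_nonneg ((x + a) * (x + b)), abs_nonneg y]
end
end

section
/- Fix p ∈ (1, ∞), a ∈ Π with a ≠ 1, and n ∈ ℕ. Define φ_n(z) = (z − a)^n / ((z+1)^{2/p} (z + ā)^n) on Π. Then φ_n belongs to the Hardy space H^p(Π) and ‖φ_n‖_{H^p} = 1; indeed |φ_n(iy)|^p = 1/(y² + 1) for all y ∈ ℝ and (1/π)∫_{−∞}^{∞} dy/(y²+1) = 1. -/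
open Filter Set MeasureTheory

noncomputable section

noncomputable section

namespace Aux15

variable (p : ℝ) (a : ℂ) (n : ℕ)

def φ (z : ℂ) : ℂ :=
  (z - a) ^ n / ((z + 1) ^ ((2 / p : ℝ) : ℂ) * (z + (starRingEnd ℂ) a) ^ n)

variable {p a n}

lemma pow_key (A B C D p : ℝ) (n : ℕ) (hA : 0 ≤ A) (hB : 0 < B) (hC : 0 < C)
    (hp : 0 < p) (hB2 : B ^ (2:ℝ) = D) :
    (A ^ n / (B ^ (2/p) * C ^ n)) ^ p = (A / C) ^ ((n:ℝ) * p) / D := by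
  rw [Real.div_rpow (by positivity) (by positivity),
    Real.mul_rpow (by positivity) (by positivity),
    ← Real.rpow_natCast A n, ← Real.rpow_natCast C n,
    ← Real.rpow_mul hA, ← Real.rpow_mul hC.le, ← Real.rpow_mul hB.le,
    div_mul_cancel₀ _ (ne_of_gt hp), hB2,
    Real.div_rpow hA hC.le, div_div, mul_comm D]

lemma abs_formula (hp : 1 < p) (ha : 0 < a.re) {x y : ℝ} (hx : 0 ≤ x) :
    ‖φ p a n ((x : ℂ) + (y : ℂ) * Complex.I)‖ ^ p
      = (‖(x : ℂ) + (y : ℂ) * Complex.I - a‖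
          / ‖(x : ℂ) + (y : ℂ) * Complex.I + (starRingEnd ℂ) a‖) ^ ((n : ℝ) * p)
        / ((x + 1) ^ 2 + y ^ 2) := by
  have hp0 : (0 : ℝ) < p := lt_trans one_pos hp
  set z : ℂ := (x : ℂ) + (y : ℂ) * Complex.I with hz
  have hzre : z.re = x := by simp [hz]
  have hzim : z.im = y := by simp [hz]
  have hB0 : (z + 1) ≠ 0 := by
    intro h
    have : (z + 1).re = 0 := by rw [h]; simp
    simp [Complex.add_re, hzre] at this
    linarith
  have hC0 : (z + (starRingEnd ℂ) a) ≠ 0 := by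
    intro h
    have : (z + (starRingEnd ℂ) a).re = 0 := by rw [h]; simp
    simp [Complex.add_re, hzre] at this
    linarith
  have habs : ‖φ p a n z‖
      = ‖z - a‖ ^ n
        / (‖z + 1‖ ^ (2 / p) * ‖z + (starRingEnd ℂ) a‖ ^ n) := by
    rw [φ, norm_div, norm_mul, norm_pow, norm_pow, Complex.norm_cpow_real]
  have hB2 : ‖z + 1‖ ^ (2:ℝ) = (x + 1) ^ 2 + y ^ 2 := by
    rw [Real.rpow_two, Complex.sq_norm]
    simp only [Complex.normSq_apply, Complex.add_re, Complex.add_im, hzre, hzim,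
      Complex.one_re, Complex.one_im, add_zero]
    ring
  rw [habs, pow_key _ _ _ _ _ n (norm_nonneg _) (norm_pos_iff.mpr hB0)
    (norm_pos_iff.mpr hC0) hp0 hB2]

lemma boundary (hp : 1 < p) (ha : 0 < a.re) (y : ℝ) :
    ‖φ p a n ((y : ℂ) * Complex.I)‖ ^ p = 1 / (y ^ 2 + 1) := by
  have h0 : ((0:ℝ) : ℂ) + (y : ℂ) * Complex.I = (y : ℂ) * Complex.I := by push_cast; ring
  have hf := abs_formula (n := n) hp ha (x := 0) (y := y) le_rfl
  rw [h0] at hf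
  rw [hf]
  have hAC : ‖(y : ℂ) * Complex.I - a‖
      = ‖(y : ℂ) * Complex.I + (starRingEnd ℂ) a‖ := by
    rw [Complex.norm_def, Complex.norm_def]
    congr 1
    simp [Complex.normSq_apply]
    ring
  have hC0 : ‖(y : ℂ) * Complex.I + (starRingEnd ℂ) a‖ ≠ 0 := by
    rw [norm_ne_zero_iff]
    intro h
    have : (((y : ℂ) * Complex.I + (starRingEnd ℂ) a)).re = 0 := by rw [h]; simp
    simp at this
    linarith
  rw [hAC, div_self hC0, Real.one_rpow]
  norm_num [add_comm]

lemma bound (hp : 1 < p) (ha : 0 < a.re) {x : ℝ} (hx : 0 < x) (y : ℝ) :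
    ‖φ p a n ((x : ℂ) + (y : ℂ) * Complex.I)‖ ^ p ≤ 1 / (y ^ 2 + 1) := by
  rw [abs_formula hp ha hx.le]
  set z : ℂ := (x : ℂ) + (y : ℂ) * Complex.I with hz
  have hzre : z.re = x := by simp [hz]
  have hzim : z.im = y := by simp [hz]
  have hC0 : (z + (starRingEnd ℂ) a) ≠ 0 := by
    intro h
    have : (z + (starRingEnd ℂ) a).re = 0 := by rw [h]; simp
    simp [Complex.add_re, hzre] at this
    linarith
  have hC : 0 < ‖z + (starRingEnd ℂ) a‖ := norm_pos_iff.mpr hC0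
  have hAC : ‖z - a‖ ≤ ‖z + (starRingEnd ℂ) a‖ := by
    rw [Complex.norm_def, Complex.norm_def]
    apply Real.sqrt_le_sqrt
    simp only [Complex.normSq_apply, Complex.sub_re, Complex.sub_im, Complex.add_re,
      Complex.add_im, Complex.conj_re, Complex.conj_im, hzre, hzim]
    nlinarith [ha, hx]
  have h1 : (‖z - a‖ / ‖z + (starRingEnd ℂ) a‖) ^ ((n : ℝ) * p) ≤ 1 :=
    Real.rpow_le_one (by positivity) ((div_le_one hC).2 hAC) (by positivity)
  have h2 : y ^ 2 + 1 ≤ (x + 1) ^ 2 + y ^ 2 := by nlinarith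
  exact div_le_div₀ (by norm_num) h1 (by positivity) h2

lemma contAt (hp : 1 < p) (ha : 0 < a.re) {z : ℂ} (hz : 0 ≤ z.re) :
    ContinuousAt (fun w => ‖φ p a n w‖ ^ p) z := by
  have hp0 : (0 : ℝ) < p := lt_trans one_pos hp
  have hB0 : (z + 1) ≠ 0 := by
    intro h
    have : (z + 1).re = 0 := by rw [h]; simp
    simp [Complex.add_re] at this
    linarith
  have hC0 : (z + (starRingEnd ℂ) a) ≠ 0 := by
    intro h
    have : (z + (starRingEnd ℂ) a).re = 0 := by rw [h]; simp
    simp [Complex.add_re] at this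
    linarith
  have hcpow : ContinuousAt (fun w : ℂ => (w + 1) ^ ((2 / p : ℝ) : ℂ)) z := by
    apply ContinuousAt.cpow (by fun_prop) continuousAt_const
    left
    simp [Complex.add_re]
    linarith
  have hφ : ContinuousAt (φ p a n) z := by
    apply ContinuousAt.div (by fun_prop) (hcpow.mul (by fun_prop))
    refine mul_ne_zero ?_ (pow_ne_zero _ hC0)
    rw [Ne, Complex.cpow_eq_zero_iff]
    rintro ⟨h, -⟩
    exact hB0 h
  exact (continuous_norm.continuousAt.comp hφ).rpow_const (Or.inr hp0.le)

lemma cont_y (hp : 1 < p) (ha : 0 < a.re) {x : ℝ} (hx : 0 ≤ x) :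
    Continuous fun y : ℝ => ‖φ p a n ((x : ℂ) + (y : ℂ) * Complex.I)‖ ^ p := by
  rw [continuous_iff_continuousAt]
  intro y
  have hmap : Continuous fun y : ℝ => (x : ℂ) + (y : ℂ) * Complex.I := by fun_prop
  have h := ContinuousAt.comp (f := fun y : ℝ => (x : ℂ) + (y : ℂ) * Complex.I) (x := y)
    (contAt (n := n) hp ha (z := (x : ℂ) + (y : ℂ) * Complex.I) (by simpa using hx))
    hmap.continuousAt
  exact h

lemma integrable_y (hp : 1 < p) (ha : 0 < a.re) {x : ℝ} (hx : 0 < x) :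
    Integrable fun y : ℝ => ‖φ p a n ((x : ℂ) + (y : ℂ) * Complex.I)‖ ^ p := by
  refine integrable_inv_one_add_sq.mono
    ((cont_y (n := n) hp ha hx.le).aestronglyMeasurable) ?_
  filter_upwards with y
  rw [Real.norm_eq_abs, Real.norm_eq_abs, abs_of_nonneg (by positivity),
    abs_of_nonneg (by positivity)]
  have := bound (n := n) hp ha hx y
  rw [one_div, add_comm (y ^ 2 : ℝ) 1] at this
  exact this

lemma int_le (hp : 1 < p) (ha : 0 < a.re) {x : ℝ} (hx : 0 < x) :
    (∫ y : ℝ, ‖φ p a n ((x : ℂ) + (y : ℂ) * Complex.I)‖ ^ p) ≤ Real.pi := by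
  calc (∫ y : ℝ, ‖φ p a n ((x : ℂ) + (y : ℂ) * Complex.I)‖ ^ p)
      ≤ ∫ y : ℝ, (1 + y ^ 2)⁻¹ := by
        refine integral_mono (integrable_y hp ha hx) integrable_inv_one_add_sq fun y => ?_
        have := bound (n := n) hp ha hx y
        rw [one_div, add_comm (y ^ 2 : ℝ) 1] at this
        exact this
    _ = Real.pi := integral_univ_inv_one_add_sq

lemma tendsto_int (hp : 1 < p) (ha : 0 < a.re) :
    Tendsto (fun x : ℝ => ∫ y : ℝ, ‖φ p a n ((x : ℂ) + (y : ℂ) * Complex.I)‖ ^ p)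
      (nhdsWithin 0 (Ioi 0)) (nhds Real.pi) := by
  have hπ : Real.pi = ∫ y : ℝ, (1 + y ^ 2)⁻¹ := integral_univ_inv_one_add_sq.symm
  rw [hπ]
  refine MeasureTheory.tendsto_integral_filter_of_dominated_convergence
    (fun y : ℝ => (1 + y ^ 2)⁻¹) ?_ ?_ integrable_inv_one_add_sq ?_
  · filter_upwards [self_mem_nhdsWithin] with x hx
    exact (cont_y (n := n) hp ha (le_of_lt hx)).aestronglyMeasurable
  · filter_upwards [self_mem_nhdsWithin] with x hx
    filter_upwards with y
    rw [Real.norm_eq_abs, abs_of_nonneg (by positivity)]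
    have := bound (n := n) hp ha hx y
    rw [one_div, add_comm (y ^ 2 : ℝ) 1] at this
    exact this
  · filter_upwards with y
    have hc : ContinuousAt
        (fun x : ℝ => ‖φ p a n ((x : ℂ) + (y : ℂ) * Complex.I)‖ ^ p) 0 := by
      have hmap : Continuous fun x : ℝ => (x : ℂ) + (y : ℂ) * Complex.I := by fun_prop
      have h := ContinuousAt.comp (f := fun x : ℝ => (x : ℂ) + (y : ℂ) * Complex.I) (x := (0:ℝ))
        (contAt (n := n) hp ha (z := ((0:ℝ) : ℂ) + (y : ℂ) * Complex.I) (by simp))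
        hmap.continuousAt
      exact h
    have h0 : ((0:ℝ) : ℂ) + (y : ℂ) * Complex.I = (y : ℂ) * Complex.I := by push_cast; ring
    have hval : ‖φ p a n (((0:ℝ) : ℂ) + (y : ℂ) * Complex.I)‖ ^ p
        = (1 + y ^ 2)⁻¹ := by
      rw [h0, boundary (n := n) hp ha y, one_div, add_comm]
    refine Tendsto.mono_left ?_ nhdsWithin_le_nhds
    rw [← hval]
    exact hc.tendsto

end Aux15

end

noncomputable section

/-- The functions `φ_n(z) = (z−a)^n/((z+1)^{2/p}(z+ā)^n)` belong to the unit sphere of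
`H^p(Π)`: their boundary values satisfy `|φ_n(iy)|^p = 1/(y²+1)`, the boundary integral is
`π`, the interior integral means are bounded by `1`, and the `H^p` norm equals `1`. -/
theorem stmt15 (p : ℝ) (hp : 1 < p) (a : ℂ) (ha : 0 < a.re) (ha1 : a ≠ 1) (n : ℕ) :
    let φ : ℂ → ℂ := fun z =>
      (z - a) ^ n / ((z + 1) ^ ((2 / p : ℝ) : ℂ) * (z + (starRingEnd ℂ) a) ^ n)
    (∀ y : ℝ, ‖φ ((y : ℂ) * Complex.I)‖ ^ p = 1 / (y ^ 2 + 1)) ∧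
    ((1 / Real.pi) * ∫ y : ℝ, 1 / (y ^ 2 + 1)) = 1 ∧
    (∀ x : ℝ, 0 < x →
      (1 / Real.pi) * ∫ y : ℝ, ‖φ ((x : ℂ) + (y : ℂ) * Complex.I)‖ ^ p ≤ 1) ∧
    (⨆ x ∈ Ioi (0 : ℝ),
      (1 / Real.pi) * ∫ y : ℝ, ‖φ ((x : ℂ) + (y : ℂ) * Complex.I)‖ ^ p) = 1 := by
  intro φ
  have hφ : φ = Aux15.φ p a n := rfl
  have hp0 : (0 : ℝ) < p := lt_trans one_pos hp
  have hπ : (0 : ℝ) < Real.pi := Real.pi_pos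
  have hfun : (fun y : ℝ => 1 / (y ^ 2 + 1)) = fun y : ℝ => (1 + y ^ 2)⁻¹ := by
    funext y; rw [one_div, add_comm]
  have part1 : ∀ y : ℝ, ‖φ ((y : ℂ) * Complex.I)‖ ^ p = 1 / (y ^ 2 + 1) := by
    intro y; rw [hφ]; exact Aux15.boundary hp ha y
  have part2 : ((1 / Real.pi) * ∫ y : ℝ, 1 / (y ^ 2 + 1)) = 1 := by
    rw [hfun, integral_univ_inv_one_add_sq, one_div_mul_cancel (ne_of_gt hπ)]
  have part3 : ∀ x : ℝ, 0 < x →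
      (1 / Real.pi) * ∫ y : ℝ, ‖φ ((x : ℂ) + (y : ℂ) * Complex.I)‖ ^ p ≤ 1 := by
    intro x hx
    rw [hφ]
    have h := Aux15.int_le (n := n) hp ha hx
    calc (1 / Real.pi) * ∫ y : ℝ, ‖Aux15.φ p a n ((x : ℂ) + (y : ℂ) * Complex.I)‖ ^ p
        ≤ (1 / Real.pi) * Real.pi := by
          apply mul_le_mul_of_nonneg_left h (by positivity)
      _ = 1 := one_div_mul_cancel (ne_of_gt hπ)
  refine ⟨part1, part2, part3, ?_⟩
  set M : ℝ → ℝ := fun x =>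
    (1 / Real.pi) * ∫ y : ℝ, ‖φ ((x : ℂ) + (y : ℂ) * Complex.I)‖ ^ p with hM
  have hMle : ∀ x ∈ Ioi (0:ℝ), M x ≤ 1 := fun x hx => part3 x hx
  have hsup_le : (⨆ x ∈ Ioi (0:ℝ), M x) ≤ 1 :=
    Real.iSup_le (fun x => Real.iSup_le (fun hx => hMle x hx) zero_le_one) zero_le_one
  have hbdd : BddAbove (Set.range fun x => ⨆ _ : x ∈ Ioi (0:ℝ), M x) := by
    refine ⟨1, ?_⟩
    rintro _ ⟨x, rfl⟩
    exact Real.iSup_le (fun hx => hMle x hx) zero_le_one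
  have hub : ∀ x ∈ Ioi (0:ℝ), M x ≤ ⨆ x ∈ Ioi (0:ℝ), M x := by
    intro x hx
    have h1 : M x ≤ ⨆ _ : x ∈ Ioi (0:ℝ), M x := by
      haveI : Nonempty (x ∈ Ioi (0:ℝ)) := ⟨hx⟩
      exact le_of_eq (ciSup_const).symm
    exact h1.trans (le_ciSup hbdd x)
  have hMtends : Tendsto M (nhdsWithin 0 (Ioi 0)) (nhds 1) := by
    have h := (Aux15.tendsto_int (n := n) hp ha).const_mul (1 / Real.pi)
    rw [one_div_mul_cancel (ne_of_gt hπ)] at h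
    have : M = fun x : ℝ =>
        (1 / Real.pi) * ∫ y : ℝ, ‖Aux15.φ p a n ((x : ℂ) + (y : ℂ) * Complex.I)‖ ^ p := by
      rw [hM, hφ]
    rw [this]
    exact h
  have hge : (1:ℝ) ≤ ⨆ x ∈ Ioi (0:ℝ), M x := by
    refine le_of_tendsto hMtends ?_
    filter_upwards [self_mem_nhdsWithin] with x hx
    exact hub x hx
  exact le_antisymm hsup_le hge
end
end
end
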